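/- arXiv:1510.00162 — 3 statements merged into one kernel-verified Lean document; each statement's English description precedes it below -/
import Mathlib

section
/- The map from ℓ∞(ℤ₂ × ℤ) to pairs of weighted shift operators given by φ ↦ (L^φ_0, L^φ_1) is a homeomorphism onto the set of pairs of bounded invertible weighted shift operators with positive coefficients (with the operator norm topology). -/
noncomputable section

/-- The set `W` of pairs of bounded invertible weighted shift operators with positive
coefficients, relative to the orthonormal basis `e` (with the topology inherited from
`B(H)²`).  Invertibility corresponds to the coefficient sequences being bounded away
from zero. -/
def WSet {H : Type*} [NormedAddCommGroup H] [InnerProductSpace ℝ H] [CompleteSpace H]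
    (e : HilbertBasis ℤ ℝ H) : Set ((H →L[ℝ] H) × (H →L[ℝ] H)) :=
  {p | ∃ α β : ℤ → ℝ,
    (∃ c : ℝ, 0 < c ∧ ∀ i : ℤ, c ≤ α i) ∧ (∃ c : ℝ, 0 < c ∧ ∀ i : ℤ, c ≤ β i) ∧
    (∀ i : ℤ, p.1 (e i) = α i • e (i + 1)) ∧ (∀ i : ℤ, p.2 (e i) = β i • e (i + 1))}

open scoped RealInnerProductSpace ENNReal NNReal

set_option linter.unusedSectionVars false

namespace WShiftAux

variable {H : Type*} [NormedAddCommGroup H] [InnerProductSpace ℝ H] [CompleteSpace H]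
  (e : HilbertBasis ℤ ℝ H)

lemma sum_bound {α : ℤ → ℝ} {C : ℝ} (hα : ∀ i, |α i| ≤ C)
    (f : lp (fun _ : ℤ => ℝ) 2) (s : Finset ℤ) :
    ∑ i ∈ s, ‖α (i - 1) * (f : ℤ → ℝ) (i - 1)‖ ^ (2 : ℝ≥0∞).toReal
      ≤ (C * ‖f‖) ^ (2 : ℝ≥0∞).toReal := by
  have hC : 0 ≤ C := le_trans (abs_nonneg _) (hα 0)
  have h2 : (0:ℝ) ≤ (2 : ℝ≥0∞).toReal := by norm_num
  have step1 : ∑ i ∈ s, ‖α (i - 1) * (f : ℤ → ℝ) (i - 1)‖ ^ (2 : ℝ≥0∞).toReal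
      ≤ ∑ i ∈ s, C ^ (2 : ℝ≥0∞).toReal * ‖(f : ℤ → ℝ) (i - 1)‖ ^ (2 : ℝ≥0∞).toReal := by
    refine Finset.sum_le_sum fun i _ => ?_
    rw [norm_mul, Real.mul_rpow (norm_nonneg _) (norm_nonneg _)]
    refine mul_le_mul_of_nonneg_right ?_ (Real.rpow_nonneg (norm_nonneg _) _)
    exact Real.rpow_le_rpow (norm_nonneg _) (by rw [Real.norm_eq_abs]; exact hα _) h2
  have step2 : ∑ i ∈ s, ‖(f : ℤ → ℝ) (i - 1)‖ ^ (2 : ℝ≥0∞).toReal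
      = ∑ j ∈ s.map (Equiv.subRight (1:ℤ)).toEmbedding, ‖(f : ℤ → ℝ) j‖ ^ (2 : ℝ≥0∞).toReal := by
    rw [Finset.sum_map]
    rfl
  have step3 := lp.sum_rpow_le_norm_rpow (p := 2) (by norm_num) f
      (s.map (Equiv.subRight (1:ℤ)).toEmbedding)
  calc _ ≤ _ := step1
    _ = C ^ (2 : ℝ≥0∞).toReal * ∑ i ∈ s, ‖(f : ℤ → ℝ) (i - 1)‖ ^ (2 : ℝ≥0∞).toReal := by
        rw [Finset.mul_sum]
    _ ≤ C ^ (2 : ℝ≥0∞).toReal * ‖f‖ ^ (2 : ℝ≥0∞).toReal := by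
        rw [step2]; exact mul_le_mul_of_nonneg_left step3 (Real.rpow_nonneg hC _)
    _ = (C * ‖f‖) ^ (2 : ℝ≥0∞).toReal := (Real.mul_rpow hC (norm_nonneg _)).symm

lemma memℓp_shift {α : ℤ → ℝ} {C : ℝ} (hα : ∀ i, |α i| ≤ C)
    (f : lp (fun _ : ℤ => ℝ) 2) :
    Memℓp (fun i : ℤ => α (i - 1) * (f : ℤ → ℝ) (i - 1)) 2 :=
  memℓp_gen' (sum_bound hα f)

/-- The lp-element obtained by shifting and scaling. -/
def shiftlp {α : ℤ → ℝ} {C : ℝ} (hα : ∀ i, |α i| ≤ C) (f : lp (fun _ : ℤ => ℝ) 2) :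
    lp (fun _ : ℤ => ℝ) 2 :=
  ⟨fun i => α (i - 1) * (f : ℤ → ℝ) (i - 1), memℓp_shift hα f⟩

lemma norm_shiftlp_le {α : ℤ → ℝ} {C : ℝ} (hα : ∀ i, |α i| ≤ C)
    (f : lp (fun _ : ℤ => ℝ) 2) : ‖shiftlp hα f‖ ≤ C * ‖f‖ := by
  have hC : 0 ≤ C := le_trans (abs_nonneg _) (hα 0)
  exact lp.norm_le_of_forall_sum_le (by norm_num)
    (mul_nonneg hC (norm_nonneg _)) (sum_bound hα f)

/-- The weighted shift operator with coefficients `α`. -/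
def shiftOp {α : ℤ → ℝ} {C : ℝ} (hα : ∀ i, |α i| ≤ C) : H →L[ℝ] H :=
  LinearMap.mkContinuous
    { toFun := fun x => e.repr.symm (shiftlp hα (e.repr x))
      map_add' := fun x y => by
        rw [← map_add]
        refine congrArg _ ?_
        apply lp.ext
        funext i
        simp only [shiftlp, map_add]
        rw [lp.coeFn_add]
        simp [mul_add]
        rfl
      map_smul' := fun c x => by
        simp only [RingHom.id_apply]
        rw [← map_smul]
        refine congrArg _ ?_
        apply lp.ext
        funext i
        simp only [shiftlp, map_smul]
        rw [lp.coeFn_smul]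
        simp [mul_comm, mul_left_comm] }
    C
    (fun x => by
      simp only [LinearMap.coe_mk, AddHom.coe_mk]
      rw [LinearIsometryEquiv.norm_map]
      simpa using norm_shiftlp_le hα (e.repr x))

lemma shiftOp_apply_basis {α : ℤ → ℝ} {C : ℝ} (hα : ∀ i, |α i| ≤ C) (j : ℤ) :
    shiftOp e hα (e j) = α j • e (j + 1) := by
  have h1 : shiftlp hα (e.repr (e j)) = α j • lp.single 2 (j + 1) (1 : ℝ) := by
    apply lp.ext
    funext i
    simp only [shiftlp, HilbertBasis.repr_self]
    rw [lp.coeFn_smul]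
    by_cases h : i = j + 1
    · subst h
      simp [lp.single_apply_self, add_sub_cancel_right]
    · have h' : i - 1 ≠ j := by omega
      simp [lp.single_apply, h, h']
  rw [shiftOp]
  simp only [LinearMap.mkContinuous_apply, LinearMap.coe_mk, AddHom.coe_mk]
  rw [h1, map_smul, HilbertBasis.repr_symm_single]

lemma norm_shiftOp_le {α : ℤ → ℝ} {C : ℝ} (hα : ∀ i, |α i| ≤ C) :
    ‖(shiftOp e hα : H →L[ℝ] H)‖ ≤ C :=
  LinearMap.mkContinuous_norm_le _ (le_trans (abs_nonneg _) (hα 0)) _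

lemma opExt {T S : H →L[ℝ] H} (h : ∀ i, T (e i) = S (e i)) : T = S := by
  have hd : Dense (↑(Submodule.span ℝ (Set.range (⇑e))) : Set H) :=
    Submodule.dense_iff_topologicalClosure_eq_top.mpr e.dense_span
  refine ContinuousLinearMap.ext_on hd ?_
  rintro _ ⟨i, rfl⟩
  exact h i

/-- Any operator acting as a weighted shift has norm at most the sup of the coefficients. -/
lemma norm_le_of_shift {T : H →L[ℝ] H} {γ : ℤ → ℝ} {C : ℝ}
    (hT : ∀ i, T (e i) = γ i • e (i + 1)) (hγ : ∀ i, |γ i| ≤ C) : ‖T‖ ≤ C := by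
  have : T = shiftOp e hγ := opExt e fun i => by rw [shiftOp_apply_basis]; exact hT i
  rw [this]
  exact norm_shiftOp_le e hγ

lemma norm_e (i : ℤ) : ‖e i‖ = 1 := e.orthonormal.1 i

/-- the coefficient of a weighted shift operator -/
def coeff (T : H →L[ℝ] H) (i : ℤ) : ℝ := ⟪e (i + 1), T (e i)⟫

lemma coeff_eq {T : H →L[ℝ] H} {γ : ℤ → ℝ} (hT : ∀ i, T (e i) = γ i • e (i + 1)) (i : ℤ) :
    coeff e T i = γ i := by
  rw [coeff, hT i, real_inner_smul_right, real_inner_self_eq_norm_sq, norm_e]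
  ring

lemma coeff_abs_le_norm {T : H →L[ℝ] H} {γ : ℤ → ℝ} (hT : ∀ i, T (e i) = γ i • e (i + 1))
    (i : ℤ) : |γ i| ≤ ‖T‖ := by
  have : ‖T (e i)‖ ≤ ‖T‖ * ‖e i‖ := T.le_opNorm _
  rw [hT i, norm_smul, norm_e, norm_e, mul_one, mul_one] at this
  simpa using this

lemma coeff_sub_abs_le (T S : H →L[ℝ] H) (i : ℤ) :
    |coeff e T i - coeff e S i| ≤ ‖T - S‖ := by
  have h1 : coeff e T i - coeff e S i = ⟪e (i + 1), (T - S) (e i)⟫ := by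
    simp [coeff, inner_sub_right]
  rw [h1]
  have h2 : |⟪e (i + 1), (T - S) (e i)⟫| ≤ ‖e (i + 1)‖ * ‖(T - S) (e i)‖ :=
    abs_real_inner_le_norm _ _
  have h3 : ‖(T - S) (e i)‖ ≤ ‖T - S‖ * ‖e i‖ := (T - S).le_opNorm _
  rw [norm_e, one_mul] at h2
  rw [norm_e, mul_one] at h3
  linarith

lemma exp_dist (s t : ℝ) : |Real.exp s - Real.exp t| ≤ |s - t| * Real.exp (max s t) := by
  have key : ∀ u v : ℝ, u ≤ v → Real.exp v - Real.exp u ≤ (v - u) * Real.exp v := by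
    intro u v huv
    have h1 : (u - v) + 1 ≤ Real.exp (u - v) := Real.add_one_le_exp _
    have h2 : Real.exp v - Real.exp u = Real.exp v * (1 - Real.exp (u - v)) := by
      rw [mul_sub, mul_one, ← Real.exp_add]; ring_nf
    rw [h2]
    have h3 : 1 - Real.exp (u - v) ≤ v - u := by linarith
    calc Real.exp v * (1 - Real.exp (u - v)) ≤ Real.exp v * (v - u) :=
          mul_le_mul_of_nonneg_left h3 (Real.exp_pos v).le
      _ = (v - u) * Real.exp v := by ring
  rcases le_total s t with h | h
  · rw [abs_of_nonpos (by simp [Real.exp_le_exp, h] : Real.exp s - Real.exp t ≤ 0),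
      abs_of_nonpos (by linarith), max_eq_right h]
    have := key s t h
    linarith
  · rw [abs_of_nonneg (by simp [Real.exp_le_exp, h] : 0 ≤ Real.exp s - Real.exp t),
      abs_of_nonneg (by linarith), max_eq_left h]
    have := key t s h
    linarith

lemma log_dist {m s t : ℝ} (hm : 0 < m) (hs : m ≤ s) (ht : m ≤ t) :
    |Real.log s - Real.log t| ≤ |s - t| / m := by
  have hspos : 0 < s := lt_of_lt_of_le hm hs
  have htpos : 0 < t := lt_of_lt_of_le hm ht
  have key : ∀ u v : ℝ, m ≤ u → m ≤ v → u ≤ v →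
      Real.log v - Real.log u ≤ (v - u) / m := by
    intro u v hu hv huv
    have hupos : 0 < u := lt_of_lt_of_le hm hu
    have hvpos : 0 < v := lt_of_lt_of_le hm hv
    have h1 : Real.log v - Real.log u = Real.log (v / u) := by
      rw [Real.log_div (ne_of_gt hvpos) (ne_of_gt hupos)]
    rw [h1]
    have h2 : Real.log (v / u) ≤ v / u - 1 := Real.log_le_sub_one_of_pos (by positivity)
    have h3 : v / u - 1 = (v - u) / u := by field_simp
    have h4 : (v - u) / u ≤ (v - u) / m := by
      apply div_le_div_of_nonneg_left (by linarith) hm hu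
    linarith
  rcases le_total s t with h | h
  · rw [abs_of_nonpos (by simp [Real.log_le_log_iff hspos htpos, h] : Real.log s - Real.log t ≤ 0),
      abs_of_nonpos (by linarith)]
    have := key s t hs ht h
    rw [neg_sub, neg_sub]
    linarith
  · rw [abs_of_nonneg (by simp [Real.log_le_log_iff htpos hspos, h] : 0 ≤ Real.log s - Real.log t),
      abs_of_nonneg (by linarith)]
    have := key t s ht hs h
    linarith

/-! ### The forward map -/

lemma expBound (φ : BoundedContinuousFunction (Bool × ℤ) ℝ) (a : Bool) :
    ∀ i : ℤ, |Real.exp (φ (a, i))| ≤ Real.exp ‖φ‖ := fun i => by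
  rw [abs_of_pos (Real.exp_pos _), Real.exp_le_exp]
  calc φ (a, i) ≤ |φ (a, i)| := le_abs_self _
    _ ≤ ‖φ‖ := by
        have := φ.norm_coe_le_norm (a, i)
        rwa [Real.norm_eq_abs] at this

/-- The weighted shift operator associated to `φ` and `a`. -/
def opOf (φ : BoundedContinuousFunction (Bool × ℤ) ℝ) (a : Bool) : H →L[ℝ] H :=
  shiftOp e (expBound φ a)

lemma opOf_apply (φ : BoundedContinuousFunction (Bool × ℤ) ℝ) (a : Bool) (i : ℤ) :
    opOf e φ a (e i) = Real.exp (φ (a, i)) • e (i + 1) :=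
  shiftOp_apply_basis e (expBound φ a) i

lemma exp_lower (φ : BoundedContinuousFunction (Bool × ℤ) ℝ) (q : Bool × ℤ) :
    Real.exp (-‖φ‖) ≤ Real.exp (φ q) := by
  rw [Real.exp_le_exp]
  have h := φ.norm_coe_le_norm q
  rw [Real.norm_eq_abs] at h
  linarith [neg_abs_le (φ q)]

lemma opOf_mem (φ : BoundedContinuousFunction (Bool × ℤ) ℝ) :
    (opOf e φ false, opOf e φ true) ∈ WSet e :=
  ⟨fun i => Real.exp (φ (false, i)), fun i => Real.exp (φ (true, i)),
    ⟨Real.exp (-‖φ‖), Real.exp_pos _, fun i => exp_lower φ (false, i)⟩,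
    ⟨Real.exp (-‖φ‖), Real.exp_pos _, fun i => exp_lower φ (true, i)⟩,
    opOf_apply e φ false, opOf_apply e φ true⟩

/-- The forward map `φ ↦ (L₀^φ, L₁^φ)`. -/
def toW (φ : BoundedContinuousFunction (Bool × ℤ) ℝ) : WSet e :=
  ⟨(opOf e φ false, opOf e φ true), opOf_mem e φ⟩

/-! ### The inverse map -/

lemma abs_log_le {c M x : ℝ} (hc : 0 < c) (h1 : c ≤ x) (h2 : x ≤ M) :
    |Real.log x| ≤ |Real.log c| + |Real.log M| := by
  have hx : 0 < x := lt_of_lt_of_le hc h1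
  rw [abs_le]
  constructor
  · have := Real.log_le_log hc h1
    have h3 : -|Real.log c| ≤ Real.log c := neg_abs_le _
    linarith [abs_nonneg (Real.log M)]
  · have := Real.log_le_log hx h2
    have h3 : Real.log M ≤ |Real.log M| := le_abs_self _
    linarith [abs_nonneg (Real.log c)]

lemma fromW_bound (p : WSet e) : ∃ C : ℝ, ∀ q : Bool × ℤ,
    ‖Real.log (coeff e (if q.1 then (p : (H →L[ℝ] H) × (H →L[ℝ] H)).2
      else (p : (H →L[ℝ] H) × (H →L[ℝ] H)).1) q.2)‖ ≤ C := by
  obtain ⟨α, β, ⟨c₁, hc₁, hα⟩, ⟨c₂, hc₂, hβ⟩, h1, h2⟩ := p.2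
  refine ⟨(|Real.log c₁| + |Real.log ‖(p : (H →L[ℝ] H) × (H →L[ℝ] H)).1‖|) +
    (|Real.log c₂| + |Real.log ‖(p : (H →L[ℝ] H) × (H →L[ℝ] H)).2‖|), ?_⟩
  rintro ⟨a, i⟩
  cases a
  · simp only [Bool.false_eq_true, reduceIte, Real.norm_eq_abs]
    rw [coeff_eq e h1]
    have hb : |Real.log (α i)| ≤ |Real.log c₁| + |Real.log ‖(p : (H →L[ℝ] H) × (H →L[ℝ] H)).1‖| :=
      abs_log_le hc₁ (hα i) (le_trans (le_abs_self _) (coeff_abs_le_norm e h1 i))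
    have hpos : (0:ℝ) ≤ |Real.log c₂| + |Real.log ‖(p : (H →L[ℝ] H) × (H →L[ℝ] H)).2‖| := by
      positivity
    linarith
  · simp only [reduceIte, Real.norm_eq_abs]
    rw [coeff_eq e h2]
    have hb : |Real.log (β i)| ≤ |Real.log c₂| + |Real.log ‖(p : (H →L[ℝ] H) × (H →L[ℝ] H)).2‖| :=
      abs_log_le hc₂ (hβ i) (le_trans (le_abs_self _) (coeff_abs_le_norm e h2 i))
    have : (0:ℝ) ≤ |Real.log c₁| + |Real.log ‖(p : (H →L[ℝ] H) × (H →L[ℝ] H)).1‖| := by positivity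
    linarith

/-- The inverse map. -/
def fromW (p : WSet e) : BoundedContinuousFunction (Bool × ℤ) ℝ :=
  BoundedContinuousFunction.ofNormedAddCommGroup
    (fun q : Bool × ℤ => Real.log (coeff e (if q.1 then (p : (H →L[ℝ] H) × (H →L[ℝ] H)).2
      else (p : (H →L[ℝ] H) × (H →L[ℝ] H)).1) q.2))
    continuous_of_discreteTopology
    (fromW_bound e p).choose (fromW_bound e p).choose_spec

lemma fromW_apply (p : WSet e) (a : Bool) (i : ℤ) :
    fromW e p (a, i) = Real.log (coeff e (if a then (p : (H →L[ℝ] H) × (H →L[ℝ] H)).2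
      else (p : (H →L[ℝ] H) × (H →L[ℝ] H)).1) i) := rfl

lemma left_inv : Function.LeftInverse (fromW e) (toW e) := by
  intro φ
  ext ⟨a, i⟩
  rw [fromW_apply]
  cases a
  · simp only [Bool.false_eq_true, reduceIte]
    rw [show ((toW e φ : (H →L[ℝ] H) × (H →L[ℝ] H)).1) = opOf e φ false from rfl,
      coeff_eq e (opOf_apply e φ false), Real.log_exp]
  · simp only [reduceIte]
    rw [show ((toW e φ : (H →L[ℝ] H) × (H →L[ℝ] H)).2) = opOf e φ true from rfl,
      coeff_eq e (opOf_apply e φ true), Real.log_exp]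

lemma right_inv : Function.RightInverse (fromW e) (toW e) := by
  intro p
  obtain ⟨α, β, ⟨c₁, hc₁, hα⟩, ⟨c₂, hc₂, hβ⟩, h1, h2⟩ := p.2
  apply Subtype.ext
  apply Prod.ext
  · apply opExt e
    intro i
    rw [show ((toW e (fromW e p) : (H →L[ℝ] H) × (H →L[ℝ] H)).1) = opOf e (fromW e p) false
      from rfl, opOf_apply, fromW_apply]
    simp only [Bool.false_eq_true, reduceIte]
    rw [coeff_eq e h1, Real.exp_log (lt_of_lt_of_le hc₁ (hα i)), h1 i]
  · apply opExt e
    intro i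
    rw [show ((toW e (fromW e p) : (H →L[ℝ] H) × (H →L[ℝ] H)).2) = opOf e (fromW e p) true
      from rfl, opOf_apply, fromW_apply]
    simp only [reduceIte]
    rw [coeff_eq e h2, Real.exp_log (lt_of_lt_of_le hc₂ (hβ i)), h2 i]

/-! ### Continuity -/

lemma cont_toW : Continuous (toW e) := by
  rw [Metric.continuous_iff]
  intro φ₀ ε hε
  set K := Real.exp (‖φ₀‖ + 1) with hK
  have hKpos : 0 < K := Real.exp_pos _
  refine ⟨min 1 (ε / K), lt_min one_pos (by positivity), ?_⟩
  intro φ hφ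
  have hφ1 : dist φ φ₀ < 1 := lt_of_lt_of_le hφ (min_le_left _ _)
  have key : ∀ a : Bool, ‖opOf e φ a - opOf e φ₀ a‖ ≤ dist φ φ₀ * K := by
    intro a
    refine norm_le_of_shift e (γ := fun i => Real.exp (φ (a, i)) - Real.exp (φ₀ (a, i)))
      (fun i => by rw [ContinuousLinearMap.sub_apply, opOf_apply, opOf_apply, sub_smul]) ?_
    intro i
    have hd : |φ (a, i) - φ₀ (a, i)| ≤ dist φ φ₀ := by
      have := BoundedContinuousFunction.dist_coe_le_dist (f := φ) (g := φ₀) (a, i)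
      rwa [Real.dist_eq] at this
    have hφ₀b : φ₀ (a, i) ≤ ‖φ₀‖ := by
      have := φ₀.norm_coe_le_norm (a, i)
      rw [Real.norm_eq_abs] at this
      exact le_trans (le_abs_self _) this
    have hmax : max (φ (a, i)) (φ₀ (a, i)) ≤ ‖φ₀‖ + 1 := by
      refine max_le ?_ (by linarith)
      have : φ (a, i) ≤ φ₀ (a, i) + |φ (a, i) - φ₀ (a, i)| := by
        have := le_abs_self (φ (a, i) - φ₀ (a, i)); linarith
      linarith
    calc |Real.exp (φ (a, i)) - Real.exp (φ₀ (a, i))|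
        ≤ |φ (a, i) - φ₀ (a, i)| * Real.exp (max (φ (a, i)) (φ₀ (a, i))) := exp_dist _ _
      _ ≤ dist φ φ₀ * K := by
          rw [hK]
          exact mul_le_mul hd (Real.exp_le_exp.mpr hmax) (Real.exp_pos _).le dist_nonneg
  have hcomp : ∀ a : Bool, ‖opOf e φ a - opOf e φ₀ a‖ < ε := by
    intro a
    calc ‖opOf e φ a - opOf e φ₀ a‖ ≤ dist φ φ₀ * K := key a
      _ < min 1 (ε / K) * K := by
          exact mul_lt_mul_of_pos_right hφ hKpos
      _ ≤ (ε / K) * K := mul_le_mul_of_nonneg_right (min_le_right _ _) hKpos.le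
      _ = ε := div_mul_cancel₀ ε (ne_of_gt hKpos)
  rw [Subtype.dist_eq, Prod.dist_eq]
  exact max_lt (by rw [dist_eq_norm]; exact hcomp false) (by rw [dist_eq_norm]; exact hcomp true)

lemma cont_fromW : Continuous (fromW e) := by
  rw [Metric.continuous_iff]
  intro p₀ ε hε
  obtain ⟨α, β, ⟨c₁, hc₁, hα⟩, ⟨c₂, hc₂, hβ⟩, h1, h2⟩ := p₀.2
  set c := min c₁ c₂ with hc
  have hcpos : 0 < c := lt_min hc₁ hc₂
  refine ⟨min (c / 2) (ε * c / 4), lt_min (by positivity) (by positivity), ?_⟩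
  intro p hp
  have hp2 : dist p p₀ < c / 2 := lt_of_lt_of_le hp (min_le_left _ _)
  have hp4 : dist p p₀ < ε * c / 4 := lt_of_lt_of_le hp (min_le_right _ _)
  -- coefficient bounds
  have hdistop : ∀ a : Bool,
      ‖(if a then (p : (H →L[ℝ] H) × (H →L[ℝ] H)).2 else (p : (H →L[ℝ] H) × (H →L[ℝ] H)).1)
        - (if a then (p₀ : (H →L[ℝ] H) × (H →L[ℝ] H)).2
          else (p₀ : (H →L[ℝ] H) × (H →L[ℝ] H)).1)‖ ≤ dist p p₀ := by
    intro a
    rw [Subtype.dist_eq, Prod.dist_eq]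
    cases a
    · simp only [Bool.false_eq_true, reduceIte]
      rw [← dist_eq_norm]
      exact le_max_left _ _
    · simp only [reduceIte]
      rw [← dist_eq_norm]
      exact le_max_right _ _
  have hcoeff₀ : ∀ (a : Bool) (i : ℤ), c ≤ coeff e
      (if a then (p₀ : (H →L[ℝ] H) × (H →L[ℝ] H)).2
        else (p₀ : (H →L[ℝ] H) × (H →L[ℝ] H)).1) i := by
    intro a i
    cases a
    · simp only [Bool.false_eq_true, reduceIte]
      rw [coeff_eq e h1]
      exact le_trans (min_le_left _ _) (hα i)
    · simp only [reduceIte]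
      rw [coeff_eq e h2]
      exact le_trans (min_le_right _ _) (hβ i)
  have hcoeffp : ∀ (a : Bool) (i : ℤ), c / 2 ≤ coeff e
      (if a then (p : (H →L[ℝ] H) × (H →L[ℝ] H)).2
        else (p : (H →L[ℝ] H) × (H →L[ℝ] H)).1) i := by
    intro a i
    have hd := le_trans (coeff_sub_abs_le e _ _ i) (hdistop a)
    have := hcoeff₀ a i
    have habs := abs_le.mp hd
    linarith [hp2]
  -- distance bound on logs
  have hbcf : dist (fromW e p) (fromW e p₀) ≤ dist p p₀ * (2 / c) := by
    rw [BoundedContinuousFunction.dist_le (by positivity)]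
    rintro ⟨a, i⟩
    rw [fromW_apply, fromW_apply, Real.dist_eq]
    have hd := le_trans (coeff_sub_abs_le e _ _ i) (hdistop a)
    have h₀ := le_trans (by linarith : c / 2 ≤ c) (hcoeff₀ a i)
    have hp' := hcoeffp a i
    calc |Real.log _ - Real.log _| ≤ |_ - _| / (c / 2) :=
          log_dist (by positivity) hp' h₀
      _ ≤ dist p p₀ / (c / 2) := by gcongr
      _ = dist p p₀ * (2 / c) := by field_simp
  calc dist (fromW e p) (fromW e p₀) ≤ dist p p₀ * (2 / c) := hbcf
    _ < (ε * c / 4) * (2 / c) := by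
        apply mul_lt_mul_of_pos_right hp4 (by positivity)
    _ = ε / 2 := by field_simp; ring
    _ < ε := by linarith

end WShiftAux

/-- The map `φ ↦ (L₀^φ, L₁^φ)` from `ℓ∞({0,1} × ℤ)` to the set of pairs of bounded
invertible weighted shift operators with positive coefficients (with the operator norm
topology) is a homeomorphism, where `L_a^φ (e i) = exp (φ (a,i)) • e (i+1)`. -/
theorem weighted_shift_pair_homeomorph
    {H : Type*} [NormedAddCommGroup H] [InnerProductSpace ℝ H] [CompleteSpace H]
    (e : HilbertBasis ℤ ℝ H) :
    ∃ F : BoundedContinuousFunction (Bool × ℤ) ℝ ≃ₜ (WSet e),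
      ∀ (φ : BoundedContinuousFunction (Bool × ℤ) ℝ) (i : ℤ),
        ((F φ : (H →L[ℝ] H) × (H →L[ℝ] H)).1 (e i) = Real.exp (φ (false, i)) • e (i + 1)) ∧
        ((F φ : (H →L[ℝ] H) × (H →L[ℝ] H)).2 (e i) = Real.exp (φ (true, i)) • e (i + 1)) := by
  refine ⟨{ toFun := WShiftAux.toW e, invFun := WShiftAux.fromW e,
            left_inv := WShiftAux.left_inv e, right_inv := WShiftAux.right_inv e,
            continuous_toFun := WShiftAux.cont_toW e,
            continuous_invFun := WShiftAux.cont_fromW e }, ?_⟩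
  intro φ i
  exact ⟨WShiftAux.opOf_apply e φ false i, WShiftAux.opOf_apply e φ true i⟩
end
end

section
/- For every φ ∈ ℓ∞(ℤ₂ × ℤ), log ϱ(L₀^φ, L₁^φ) = sup over shift-invariant Borel probability measures μ on Σ₂ of Λ(φ, μ). -/
open MeasureTheory Filter

noncomputable section

/-- The full two-sided shift space on two symbols. -/
abbrev Sig := ℤ → Bool

/-- The two-sided shift map. -/
def shift : Sig → Sig := fun x i => x (i + 1)

/-- `birk φ n x = sup_{k ∈ ℤ} Σ_{i=0}^{n-1} φ(x_i, i+k)`, which equals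
`log ‖L^φ_{x_{n-1}} ⋯ L^φ_{x_0}‖` for the associated weighted shift operators. -/
def birk (φ : Bool → ℤ → ℝ) (n : ℕ) (x : Sig) : ℝ :=
  ⨆ k : ℤ, ∑ i ∈ Finset.range n, φ (x (i : ℤ)) ((i : ℤ) + k)

/-- The top Lyapunov exponent `Λ(φ,μ) = inf_{n ≥ 1} (1/n) ∫ birk φ n dμ`
(the limit exists and equals this infimum by subadditivity). -/
def Lam (φ : Bool → ℤ → ℝ) (μ : Measure Sig) : ℝ :=
  ⨅ n : ℕ, ((n : ℝ) + 1)⁻¹ * ∫ x, birk φ (n + 1) x ∂μ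

/-- `log ϱ(L₀^φ, L₁^φ) = inf_{n ≥ 1} (1/n) sup_{x} birk φ n x`. -/
def logSpr (φ : Bool → ℤ → ℝ) : ℝ :=
  ⨅ n : ℕ, ((n : ℝ) + 1)⁻¹ * ⨆ x : Sig, birk φ (n + 1) x

open Topology

section basics
variable {φ : Bool → ℤ → ℝ} {C : ℝ}

lemma sum_abs_le (hC : ∀ a i, |φ a i| ≤ C) (n : ℕ) (x : Sig) (k : ℤ) :
    |∑ i ∈ Finset.range n, φ (x (i : ℤ)) ((i : ℤ) + k)| ≤ n * C := by
  calc |∑ i ∈ Finset.range n, φ (x (i : ℤ)) ((i : ℤ) + k)|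
      ≤ ∑ i ∈ Finset.range n, |φ (x (i : ℤ)) ((i : ℤ) + k)| := Finset.abs_sum_le_sum_abs _ _
    _ ≤ ∑ _i ∈ Finset.range n, C := Finset.sum_le_sum fun i _ => hC _ _
    _ = n * C := by simp [mul_comm]

lemma birk_bddAbove (hC : ∀ a i, |φ a i| ≤ C) (n : ℕ) (x : Sig) :
    BddAbove (Set.range fun k : ℤ => ∑ i ∈ Finset.range n, φ (x (i : ℤ)) ((i : ℤ) + k)) := by
  refine ⟨n * C, ?_⟩
  rintro y ⟨k, rfl⟩
  exact (abs_le.mp (sum_abs_le hC n x k)).2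

lemma birk_le (hC : ∀ a i, |φ a i| ≤ C) (n : ℕ) (x : Sig) : birk φ n x ≤ n * C :=
  ciSup_le fun k => (abs_le.mp (sum_abs_le hC n x k)).2

lemma le_birk (hC : ∀ a i, |φ a i| ≤ C) (n : ℕ) (x : Sig) : -(n * C) ≤ birk φ n x :=
  le_trans (neg_le_of_abs_le (sum_abs_le hC n x 0)) (le_ciSup (birk_bddAbove hC n x) 0)

lemma abs_birk_le (hC : ∀ a i, |φ a i| ≤ C) (n : ℕ) (x : Sig) : |birk φ n x| ≤ n * C :=
  abs_le.mpr ⟨le_birk hC n x, birk_le hC n x⟩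

lemma C_nonneg (hC : ∀ a i, |φ a i| ≤ C) : 0 ≤ C := (abs_nonneg _).trans (hC true 0)

lemma shift_iter (n : ℕ) : ∀ (x : Sig) (i : ℤ), (shift^[n] x) i = x (i + n) := by
  induction n with
  | zero => simp
  | succ m ih =>
    intro x i
    rw [Function.iterate_succ_apply, ih (shift x) i]
    simp only [shift]
    congr 1
    push_cast; ring

lemma birk_subadd (hC : ∀ a i, |φ a i| ≤ C) (n m : ℕ) (x : Sig) :
    birk φ (n + m) x ≤ birk φ n x + birk φ m (shift^[n] x) := by
  refine ciSup_le fun k => ?_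
  rw [Finset.sum_range_add]
  have h1 : ∑ i ∈ Finset.range n, φ (x (i : ℤ)) ((i : ℤ) + k) ≤ birk φ n x :=
    le_ciSup (birk_bddAbove hC n x) k
  have h2 : ∑ i ∈ Finset.range m, φ (x ((n + i : ℕ) : ℤ)) (((n + i : ℕ) : ℤ) + k)
      ≤ birk φ m (shift^[n] x) := by
    have heq : ∀ i ∈ Finset.range m,
        φ (x ((n + i : ℕ) : ℤ)) (((n + i : ℕ) : ℤ) + k)
          = φ ((shift^[n] x) (i : ℤ)) ((i : ℤ) + ((n : ℤ) + k)) := by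
      intro i _
      rw [shift_iter]
      congr 1
      · congr 1; push_cast; ring
      · push_cast; ring
    rw [Finset.sum_congr rfl heq]
    exact le_ciSup (birk_bddAbove hC m _) ((n : ℤ) + k)
  linarith

lemma birk_congr {n : ℕ} {x y : Sig} (h : ∀ i : ℕ, i < n → x i = y i) :
    birk φ n x = birk φ n y := by
  unfold birk
  congr 1
  funext k
  exact Finset.sum_congr rfl fun i hi => by rw [h i (Finset.mem_range.mp hi)]

end basics


section blocks
variable {φ : Bool → ℤ → ℝ} {C : ℝ}

lemma birk_blocks (hC : ∀ a i, |φ a i| ≤ C) (n : ℕ) :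
    ∀ (q : ℕ) (y : Sig), birk φ (q * n) y ≤ ∑ j ∈ Finset.range q, birk φ n (shift^[j * n] y) := by
  intro q
  induction q with
  | zero => intro y; simp [birk]
  | succ p ih =>
    intro y
    have h1 : birk φ ((p + 1) * n) y ≤ birk φ n y + birk φ (p * n) (shift^[n] y) := by
      have := birk_subadd hC n (p * n) y
      have hpn : (p + 1) * n = n + p * n := by ring
      rw [hpn]; exact this
    have h2 := ih (shift^[n] y)
    have h3 : ∀ j ∈ Finset.range p,
        birk φ n (shift^[j * n] (shift^[n] y)) = birk φ n (shift^[(j + 1) * n] y) := by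
      intro j _
      rw [← Function.iterate_add_apply]
      congr 2
      ring
    rw [Finset.sum_congr rfl h3] at h2
    rw [Finset.sum_range_succ']
    have h0 : shift^[0 * n] y = y := by norm_num
    rw [h0]
    linarith

lemma key_lower (hC : ∀ a i, |φ a i| ≤ C) {n m : ℕ} (hn : 1 ≤ n) (hm : n ≤ m) (x : Sig) :
    (n : ℝ) * birk φ m x - 4 * n ^ 2 * C ≤ ∑ i ∈ Finset.range m, birk φ n (shift^[i] x) := by
  have hC0 : 0 ≤ C := C_nonneg hC
  obtain ⟨q, s, hmeq, hs⟩ : ∃ q s : ℕ, m = n * q + n + s ∧ s < n := by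
    refine ⟨m / n - 1, m % n, ?_, Nat.mod_lt _ (by omega)⟩
    have h1 : n * (m / n) + m % n = m := Nat.div_add_mod m n
    have h2 : 1 ≤ m / n := (Nat.one_le_div_iff (by omega)).mpr hm
    obtain ⟨k, hk⟩ : ∃ k, m / n = k + 1 := ⟨m / n - 1, by omega⟩
    rw [hk] at h1
    have h3 : n * (k + 1) = n * k + n := by ring
    have h4 : m / n - 1 = k := by omega
    rw [h4]
    omega
  have hqm : q * n + n + s = m := by rw [mul_comm]; omega
  -- Step A: per-residue bound
  have stepA : ∀ r : ℕ, r < n →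
      (birk φ m x : ℝ) ≤ (∑ j ∈ Finset.range q, birk φ n (shift^[j * n + r] x)) + (2 * n) * C := by
    intro r hr
    have ht : m = r + (q * n + (n + s - r)) := by omega
    set t : ℕ := n + s - r with htdef
    have h1 : birk φ m x ≤ birk φ r x + birk φ (q * n + t) (shift^[r] x) := by
      rw [ht]; exact birk_subadd hC r (q * n + t) x
    have h2 : birk φ (q * n + t) (shift^[r] x)
        ≤ birk φ (q * n) (shift^[r] x) + birk φ t (shift^[q * n] (shift^[r] x)) :=
      birk_subadd hC (q * n) t _
    have h3 := birk_blocks hC n q (shift^[r] x)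
    have h4 : ∀ j ∈ Finset.range q,
        birk φ n (shift^[j * n] (shift^[r] x)) = birk φ n (shift^[j * n + r] x) := by
      intro j _; rw [← Function.iterate_add_apply]
    rw [Finset.sum_congr rfl h4] at h3
    have h5 : birk φ r x ≤ r * C := birk_le hC r x
    have h6 : birk φ t (shift^[q * n] (shift^[r] x)) ≤ t * C := birk_le hC t _
    have hrt : (r : ℝ) * C + t * C ≤ (2 * n) * C := by
      have hrt' : (r : ℝ) + t ≤ 2 * n := by
        have : r + t ≤ 2 * n := by omega
        exact_mod_cast this
      nlinarith
    linarith
  -- Step B: sum over residues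
  have stepB : (n : ℝ) * birk φ m x
      ≤ (∑ r ∈ Finset.range n, ∑ j ∈ Finset.range q, birk φ n (shift^[j * n + r] x))
        + n * ((2 * n) * C) := by
    have h := Finset.sum_le_sum (fun r hr => stepA r (Finset.mem_range.mp hr))
    simp only [Finset.sum_add_distrib, Finset.sum_const, Finset.card_range, nsmul_eq_mul] at h
    exact h
  -- Step C: double sum as sum over an injective image T ⊆ range m
  set T : Finset ℕ := (Finset.range n ×ˢ Finset.range q).image (fun p => p.2 * n + p.1) with hT
  have hinj : ∀ p₁ ∈ Finset.range n ×ˢ Finset.range q, ∀ p₂ ∈ Finset.range n ×ˢ Finset.range q,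
      p₁.2 * n + p₁.1 = p₂.2 * n + p₂.1 → p₁ = p₂ := by
    rintro ⟨r₁, j₁⟩ h₁ ⟨r₂, j₂⟩ h₂ heq
    simp only [Finset.mem_product, Finset.mem_range] at h₁ h₂
    simp only at heq
    have e1 : (j₁ * n + r₁) % n = r₁ % n := by rw [mul_comm]; exact Nat.mul_add_mod n j₁ r₁
    have e2 : (j₂ * n + r₂) % n = r₂ % n := by rw [mul_comm]; exact Nat.mul_add_mod n j₂ r₂
    have h12 : r₁ % n = r₂ % n := by rw [← e1, heq, e2]
    rw [Nat.mod_eq_of_lt h₁.1, Nat.mod_eq_of_lt h₂.1] at h12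
    subst h12
    have hjj : j₁ * n = j₂ * n := by omega
    have : j₁ = j₂ := Nat.eq_of_mul_eq_mul_right (by omega) hjj
    simp [this]
  have hinj' : Set.InjOn (fun p : ℕ × ℕ => p.2 * n + p.1)
      ↑(Finset.range n ×ˢ Finset.range q) :=
    fun a ha b hb h => hinj a (Finset.mem_coe.mp ha) b (Finset.mem_coe.mp hb) h
  have hsumT : ∑ i ∈ T, birk φ n (shift^[i] x)
      = ∑ r ∈ Finset.range n, ∑ j ∈ Finset.range q, birk φ n (shift^[j * n + r] x) := by
    rw [hT, Finset.sum_image hinj, Finset.sum_product]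
  have hTsub : T ⊆ Finset.range m := by
    intro i hi
    rw [hT] at hi
    obtain ⟨⟨r, j⟩, hp, rfl⟩ := Finset.mem_image.mp hi
    simp only [Finset.mem_product, Finset.mem_range] at hp
    simp only
    refine Finset.mem_range.mpr ?_
    have h1 : (j + 1) * n ≤ q * n := Nat.mul_le_mul_right n (by omega)
    have h2 : (j + 1) * n = j * n + n := by ring
    omega
  have hcardT : T.card = n * q := by
    rw [hT, Finset.card_image_of_injOn hinj', Finset.card_product]
    simp [Finset.card_range, mul_comm]
  -- Step D
  have hsplit := Finset.sum_sdiff (f := fun i => birk φ n (shift^[i] x)) hTsub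
  have hlb : ∀ i ∈ Finset.range m \ T, -((n : ℝ) * C) ≤ birk φ n (shift^[i] x) :=
    fun i _ => le_birk hC n _
  have hcard : ((Finset.range m \ T).card : ℝ) ≤ 2 * n := by
    rw [Finset.card_sdiff_of_subset hTsub, Finset.card_range, hcardT]
    have h1 : m - n * q ≤ 2 * n := by omega
    calc ((m - n * q : ℕ) : ℝ) ≤ ((2 * n : ℕ) : ℝ) := Nat.cast_le.mpr h1
      _ = 2 * n := by push_cast; ring
  have hsd : -((2 * n : ℝ) * (n * C)) ≤ ∑ i ∈ Finset.range m \ T, birk φ n (shift^[i] x) := by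
    calc -((2 * n : ℝ) * (n * C))
        ≤ -(((Finset.range m \ T).card : ℝ) * (n * C)) := by
          have h0 : (0:ℝ) ≤ n * C := by positivity
          nlinarith
      _ = ∑ _i ∈ Finset.range m \ T, -((n:ℝ) * C) := by
          rw [Finset.sum_const, nsmul_eq_mul]; ring
      _ ≤ _ := Finset.sum_le_sum hlb
  have hn' : (1 : ℝ) ≤ n := by exact_mod_cast hn
  nlinarith [stepB, hsd, hsplit, hsumT]

end blocks

section cyl

/-- A set determined by the coordinates in the window `[-N, N]`. -/
def IsCyl (U : Set Sig) : Prop :=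
  ∃ N : ℕ, ∀ x y : Sig, (∀ i : ℤ, i.natAbs ≤ N → x i = y i) → (x ∈ U ↔ y ∈ U)

lemma isCyl_univ : IsCyl Set.univ := ⟨0, fun _ _ _ => Iff.rfl⟩

lemma isCyl_empty : IsCyl ∅ := ⟨0, fun _ _ _ => Iff.rfl⟩

lemma IsCyl.mono_window {U : Set Sig} {N M : ℕ} (h : N ≤ M)
    (hU : ∀ x y : Sig, (∀ i : ℤ, i.natAbs ≤ N → x i = y i) → (x ∈ U ↔ y ∈ U)) :
    ∀ x y : Sig, (∀ i : ℤ, i.natAbs ≤ M → x i = y i) → (x ∈ U ↔ y ∈ U) :=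
  fun x y hxy => hU x y fun i hi => hxy i (le_trans hi h)

lemma IsCyl.union {U V : Set Sig} (hU : IsCyl U) (hV : IsCyl V) : IsCyl (U ∪ V) := by
  obtain ⟨N, hN⟩ := hU; obtain ⟨M, hM⟩ := hV
  refine ⟨max N M, fun x y hxy => ?_⟩
  have h1 := IsCyl.mono_window (le_max_left N M) hN x y hxy
  have h2 := IsCyl.mono_window (le_max_right N M) hM x y hxy
  simp [Set.mem_union, h1, h2]

lemma IsCyl.inter {U V : Set Sig} (hU : IsCyl U) (hV : IsCyl V) : IsCyl (U ∩ V) := by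
  obtain ⟨N, hN⟩ := hU; obtain ⟨M, hM⟩ := hV
  refine ⟨max N M, fun x y hxy => ?_⟩
  have h1 := IsCyl.mono_window (le_max_left N M) hN x y hxy
  have h2 := IsCyl.mono_window (le_max_right N M) hM x y hxy
  simp [Set.mem_inter_iff, h1, h2]

lemma IsCyl.compl {U : Set Sig} (hU : IsCyl U) : IsCyl Uᶜ := by
  obtain ⟨N, hN⟩ := hU
  exact ⟨N, fun x y hxy => by simp [Set.mem_compl_iff, hN x y hxy]⟩

lemma IsCyl.preimage_shift {U : Set Sig} (hU : IsCyl U) : IsCyl (shift ⁻¹' U) := by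
  obtain ⟨N, hN⟩ := hU
  refine ⟨N + 1, fun x y hxy => ?_⟩
  have : ∀ i : ℤ, i.natAbs ≤ N → shift x i = shift y i := by
    intro i hi
    simp only [shift]
    exact hxy (i + 1) (by omega)
  simpa [Set.mem_preimage] using hN (shift x) (shift y) this

/-- Reconstruction of a point of `Sig` from its window `[-N, N]`. -/
def recon (N : ℕ) (f : Fin (2 * N + 1) → Bool) : Sig := fun i =>
  if h : (i + N).toNat < 2 * N + 1 ∧ 0 ≤ i + N then f ⟨(i + N).toNat, h.1⟩ else false

/-- Restriction of a point to the window `[-N, N]`. -/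
def restr (N : ℕ) (x : Sig) : Fin (2 * N + 1) → Bool := fun j => x ((j : ℤ) - N)

lemma recon_restr (N : ℕ) (x : Sig) (i : ℤ) (hi : i.natAbs ≤ N) :
    recon N (restr N x) i = x i := by
  have h1 : 0 ≤ i + N := by omega
  have h2 : (i + N).toNat < 2 * N + 1 := by omega
  simp only [recon, restr, h1, h2, and_true, dif_pos]
  congr 1
  omega

lemma IsCyl.eq_preimage {U : Set Sig} (hU : IsCyl U) :
    ∃ N : ℕ, ∃ S : Set (Fin (2 * N + 1) → Bool), U = restr N ⁻¹' S := by
  obtain ⟨N, hN⟩ := hU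
  refine ⟨N, recon N ⁻¹' U, ?_⟩
  ext x
  simp only [Set.mem_preimage]
  exact hN x (recon N (restr N x)) (fun i hi => (recon_restr N x i hi).symm)

lemma measurable_restr (N : ℕ) : Measurable (restr N) :=
  measurable_pi_lambda _ fun j => measurable_pi_apply _

lemma continuous_restr (N : ℕ) : Continuous (restr N) :=
  continuous_pi fun j => continuous_apply _

lemma IsCyl.measurableSet {U : Set Sig} (hU : IsCyl U) : MeasurableSet U := by
  obtain ⟨N, S, rfl⟩ := hU.eq_preimage
  exact measurable_restr N (S.to_countable.measurableSet)

lemma IsCyl.isOpen {U : Set Sig} (hU : IsCyl U) : IsOpen U := by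
  obtain ⟨N, S, rfl⟩ := hU.eq_preimage
  exact (isOpen_discrete S).preimage (continuous_restr N)

lemma IsCyl.isClosed {U : Set Sig} (hU : IsCyl U) : IsClosed U := by
  have := hU.compl.isOpen
  simpa [isClosed_compl_iff] using this.isClosed_compl

lemma IsCyl.isCompact {U : Set Sig} (hU : IsCyl U) : IsCompact U :=
  hU.isClosed.isCompact

/-- The cylinder of points whose first `n` coordinates form the word `w`. -/
def cylW (n : ℕ) (w : Fin n → Bool) : Set Sig := {x | ∀ i : Fin n, x ((i : ℕ) : ℤ) = w i}

lemma isCyl_cylW (n : ℕ) (w : Fin n → Bool) : IsCyl (cylW n w) := by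
  refine ⟨n, fun x y hxy => ?_⟩
  have key : ∀ i : Fin n, x ((i : ℕ) : ℤ) = y ((i : ℕ) : ℤ) := by
    intro i
    refine hxy _ ?_
    have : (i : ℕ) < n := i.2
    omega
  constructor <;> intro h i
  · rw [← key i]; exact h i
  · rw [key i]; exact h i

/-- Canonical representative of a word. -/
def wrep (n : ℕ) (w : Fin n → Bool) : Sig := fun i =>
  if h : 0 ≤ i ∧ i < n then w ⟨i.toNat, by omega⟩ else false

lemma wrep_mem (n : ℕ) (w : Fin n → Bool) : wrep n w ∈ cylW n w := by
  intro i
  have h : 0 ≤ ((i : ℕ) : ℤ) ∧ ((i : ℕ) : ℤ) < n := by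
    constructor
    · positivity
    · exact_mod_cast i.2
  simp only [wrep, dif_pos h]
  congr
  all_goals omega

/-- Value of `birk` on a cylinder. -/
def wval (φ : Bool → ℤ → ℝ) (n : ℕ) (w : Fin n → Bool) : ℝ := birk φ n (wrep n w)

lemma birk_of_mem_cylW {φ : Bool → ℤ → ℝ} {n : ℕ} {w : Fin n → Bool} {x : Sig}
    (hx : x ∈ cylW n w) : birk φ n x = wval φ n w := by
  refine birk_congr fun i hi => ?_
  have h1 : x ((i : ℕ) : ℤ) = w ⟨i, hi⟩ := hx ⟨i, hi⟩
  have h2 : wrep n w ((i : ℕ) : ℤ) = w ⟨i, hi⟩ := by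
    have h : (0 : ℤ) ≤ (i : ℤ) ∧ (i : ℤ) < n := by constructor <;> [positivity; exact_mod_cast hi]
    simp only [wrep, dif_pos h]
    congr
    all_goals omega
  rw [h1, h2]

lemma mem_cylW_iff {n : ℕ} {w : Fin n → Bool} {x : Sig} :
    x ∈ cylW n w ↔ w = fun i : Fin n => x ((i : ℕ) : ℤ) := by
  constructor
  · intro h; funext i; exact (h i).symm
  · rintro rfl i; rfl

lemma birk_eq_sum_indicator (φ : Bool → ℤ → ℝ) (n : ℕ) (x : Sig) :
    birk φ n x = ∑ w : Fin n → Bool, (cylW n w).indicator (fun _ => wval φ n w) x := by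
  classical
  set w₀ : Fin n → Bool := fun i => x ((i : ℕ) : ℤ) with hw₀
  have hxw₀ : x ∈ cylW n w₀ := fun i => rfl
  rw [Finset.sum_eq_single w₀]
  · rw [Set.indicator_of_mem hxw₀]
    exact birk_of_mem_cylW hxw₀
  · intro w _ hne
    rw [Set.indicator_of_notMem]
    intro hmem
    exact hne (mem_cylW_iff.mp hmem)
  · intro h
    exact absurd (Finset.mem_univ w₀) h

lemma measurable_birk (φ : Bool → ℤ → ℝ) (n : ℕ) : Measurable (birk φ n) := by
  have : birk φ n = fun x => ∑ w : Fin n → Bool, (cylW n w).indicator (fun _ => wval φ n w) x :=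
    funext fun x => birk_eq_sum_indicator φ n x
  rw [this]
  exact Finset.measurable_sum _ fun w _ =>
    Measurable.indicator measurable_const (isCyl_cylW n w).measurableSet

lemma integrable_birk (φ : Bool → ℤ → ℝ) {C : ℝ} (hC : ∀ a i, |φ a i| ≤ C) (n : ℕ)
    (μ : Measure Sig) [IsFiniteMeasure μ] : Integrable (birk φ n) μ := by
  refine Integrable.mono' (integrable_const ((n : ℝ) * C))
    (measurable_birk φ n).aestronglyMeasurable ?_
  filter_upwards with x
  exact abs_birk_le hC n x

lemma integral_birk (φ : Bool → ℤ → ℝ) (n : ℕ) (μ : Measure Sig) [IsFiniteMeasure μ] :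
    ∫ x, birk φ n x ∂μ = ∑ w : Fin n → Bool, (μ (cylW n w)).toReal * wval φ n w := by
  have h1 : ∫ x, birk φ n x ∂μ
      = ∫ x, ∑ w : Fin n → Bool, (cylW n w).indicator (fun _ => wval φ n w) x ∂μ := by
    congr 1
    funext x
    exact birk_eq_sum_indicator φ n x
  rw [h1, integral_finset_sum]
  · refine Finset.sum_congr rfl fun w _ => ?_
    rw [integral_indicator_const _ (isCyl_cylW n w).measurableSet, smul_eq_mul, measureReal_def]
  · intro w _
    exact (integrable_const _).indicator (isCyl_cylW n w).measurableSet

end cyl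

section freq
open Classical in
/-- Indicator (0/1-valued). -/
noncomputable def ind (U : Set Sig) (y : Sig) : ℝ := if y ∈ U then 1 else 0

lemma ind_nonneg (U : Set Sig) (y : Sig) : 0 ≤ ind U y := by
  unfold ind; split <;> norm_num

lemma ind_le_one (U : Set Sig) (y : Sig) : ind U y ≤ 1 := by
  unfold ind; split <;> norm_num

lemma ind_union {U V : Set Sig} (h : Disjoint U V) (y : Sig) :
    ind (U ∪ V) y = ind U y + ind V y := by
  unfold ind
  by_cases hU : y ∈ U <;> by_cases hV : y ∈ V
  · exact absurd (Set.mem_inter hU hV) (by rw [Set.disjoint_iff_inter_eq_empty.mp h]; simp)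
  all_goals simp [hU, hV, Set.mem_union]

lemma ind_mono {U V : Set Sig} (h : U ⊆ V) (y : Sig) : ind U y ≤ ind V y := by
  unfold ind
  by_cases hU : y ∈ U
  · simp [hU, h hU]
  · simp only [hU, if_false]
    split <;> norm_num

lemma ind_univ (y : Sig) : ind Set.univ y = 1 := by simp [ind]

lemma ind_preimage_shift (U : Set Sig) (y : Sig) :
    ind (shift ⁻¹' U) y = ind U (shift y) := by
  unfold ind
  by_cases h : shift y ∈ U
  · rw [if_pos h, if_pos (Set.mem_preimage.mpr h)]
  · rw [if_neg h, if_neg (fun hh => h (Set.mem_preimage.mp hh))]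

/-- Empirical frequency of visits of the orbit of `X m` to `U` during time `m`. -/
noncomputable def freq (X : ℕ → Sig) (U : Set Sig) (m : ℕ) : ℝ :=
  (∑ i ∈ Finset.range m, ind U (shift^[i] (X m))) / m

lemma freq_nonneg (X : ℕ → Sig) (U : Set Sig) (m : ℕ) : 0 ≤ freq X U m := by
  unfold freq
  apply div_nonneg _ (by positivity)
  exact Finset.sum_nonneg fun i _ => ind_nonneg _ _

lemma freq_le_one (X : ℕ → Sig) (U : Set Sig) (m : ℕ) : freq X U m ≤ 1 := by
  unfold freq
  rcases Nat.eq_zero_or_pos m with hm | hm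
  · simp [hm]
  · rw [div_le_one (by positivity)]
    calc ∑ i ∈ Finset.range m, ind U (shift^[i] (X m)) ≤ ∑ _i ∈ Finset.range m, 1 :=
          Finset.sum_le_sum fun i _ => ind_le_one _ _
      _ = m := by simp

lemma freq_union (X : ℕ → Sig) {U V : Set Sig} (h : Disjoint U V) (m : ℕ) :
    freq X (U ∪ V) m = freq X U m + freq X V m := by
  unfold freq
  rw [← add_div]
  congr 1
  rw [← Finset.sum_add_distrib]
  exact Finset.sum_congr rfl fun i _ => ind_union h _

lemma freq_mono (X : ℕ → Sig) {U V : Set Sig} (h : U ⊆ V) (m : ℕ) :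
    freq X U m ≤ freq X V m := by
  unfold freq
  rcases Nat.eq_zero_or_pos m with hm | hm
  · simp [hm]
  gcongr with i hi
  exact ind_mono h _

lemma freq_univ (X : ℕ → Sig) {m : ℕ} (hm : 1 ≤ m) : freq X Set.univ m = 1 := by
  unfold freq
  have : ∑ i ∈ Finset.range m, ind Set.univ (shift^[i] (X m)) = m := by
    rw [Finset.sum_congr rfl fun i _ => ind_univ _]
    simp
  rw [this, div_self]
  positivity

/-- The chosen ultrafilter extending `atTop`. -/
def UF : Ultrafilter ℕ := Ultrafilter.of atTop

lemma UF_le : (UF : Filter ℕ) ≤ atTop := Ultrafilter.of_le _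

/-- Limit frequency along the ultrafilter. -/
noncomputable def Lfun (X : ℕ → Sig) (U : Set Sig) : ℝ := limUnder UF (freq X U)

lemma tendsto_freq_Lfun (X : ℕ → Sig) (U : Set Sig) :
    Filter.Tendsto (freq X U) UF (𝓝 (Lfun X U)) := by
  apply tendsto_nhds_limUnder
  have hmem : (UF : Filter ℕ).map (freq X U) ≤ Filter.principal (Set.Icc (0:ℝ) 1) := by
    rw [Filter.le_principal_iff]
    refine Filter.mem_map.mpr ?_
    have : ∀ m, freq X U m ∈ Set.Icc (0:ℝ) 1 := fun m => ⟨freq_nonneg X U m, freq_le_one X U m⟩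
    exact Filter.univ_mem' this
  obtain ⟨a, _, ha⟩ := (isCompact_Icc (a := (0:ℝ)) (b := 1)).ultrafilter_le_nhds
    (UF.map (freq X U)) (by exact_mod_cast hmem)
  exact ⟨a, ha⟩

lemma Lfun_eq_of_tendsto {X : ℕ → Sig} {U : Set Sig} {a : ℝ}
    (h : Filter.Tendsto (freq X U) UF (𝓝 a)) : Lfun X U = a :=
  tendsto_nhds_unique (tendsto_freq_Lfun X U) h

lemma Lfun_nonneg (X : ℕ → Sig) (U : Set Sig) : 0 ≤ Lfun X U :=
  ge_of_tendsto (tendsto_freq_Lfun X U) (Filter.univ_mem' fun m => freq_nonneg X U m)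

lemma Lfun_le_one (X : ℕ → Sig) (U : Set Sig) : Lfun X U ≤ 1 :=
  le_of_tendsto (tendsto_freq_Lfun X U) (Filter.univ_mem' fun m => freq_le_one X U m)

lemma Lfun_union (X : ℕ → Sig) {U V : Set Sig} (h : Disjoint U V) :
    Lfun X (U ∪ V) = Lfun X U + Lfun X V := by
  apply Lfun_eq_of_tendsto
  have := (tendsto_freq_Lfun X U).add (tendsto_freq_Lfun X V)
  refine this.congr fun m => (freq_union X h m).symm

lemma Lfun_mono (X : ℕ → Sig) {U V : Set Sig} (h : U ⊆ V) : Lfun X U ≤ Lfun X V :=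
  le_of_tendsto_of_tendsto (tendsto_freq_Lfun X U) (tendsto_freq_Lfun X V)
    (Filter.univ_mem' fun m => freq_mono X h m)

lemma Lfun_univ (X : ℕ → Sig) : Lfun X Set.univ = 1 := by
  apply Lfun_eq_of_tendsto
  have hev : freq X Set.univ =ᶠ[(UF : Filter ℕ)] (fun _ => 1) := by
    apply UF_le
    filter_upwards [Filter.eventually_ge_atTop 1] with m hm
    exact freq_univ X hm
  exact Filter.Tendsto.congr' hev.symm tendsto_const_nhds

lemma Lfun_shift (X : ℕ → Sig) (U : Set Sig) : Lfun X (shift ⁻¹' U) = Lfun X U := by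
  apply Lfun_eq_of_tendsto
  set d : ℕ → ℝ := fun m => freq X (shift ⁻¹' U) m - freq X U m with hd
  have hsum : ∀ m : ℕ, freq X (shift ⁻¹' U) m
      = freq X U m + (ind U (shift^[m] (X m)) - ind U (X m)) / m := by
    intro m
    unfold freq
    rw [Finset.sum_congr rfl (fun i (_ : i ∈ Finset.range m) => by
      rw [ind_preimage_shift U (shift^[i] (X m)), ← Function.iterate_succ_apply' shift i])]
    have : ∑ i ∈ Finset.range m, ind U (shift^[i+1] (X m))
        = (∑ i ∈ Finset.range m, ind U (shift^[i] (X m))) + ind U (shift^[m] (X m))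
          - ind U (shift^[0] (X m)) := by
      have h1 := Finset.sum_range_succ (fun i => ind U (shift^[i] (X m))) m
      have h2 := Finset.sum_range_succ' (fun i => ind U (shift^[i] (X m))) m
      rw [h1] at h2
      linarith [h2]
    rw [this]
    simp only [Function.iterate_zero_apply]
    ring
  have hdb : ∀ m : ℕ, |(ind U (shift^[m] (X m)) - ind U (X m)) / m| ≤ 2 / m := by
    intro m
    rcases Nat.eq_zero_or_pos m with hm | hm
    · simp [hm]
    rw [abs_div, abs_of_nonneg (by positivity : (0:ℝ) ≤ (m:ℝ))]
    gcongr
    have h1 := ind_nonneg U (shift^[m] (X m))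
    have h2 := ind_le_one U (shift^[m] (X m))
    have h3 := ind_nonneg U (X m)
    have h4 := ind_le_one U (X m)
    rw [abs_le]
    constructor <;> linarith
  have hd0 : Filter.Tendsto (fun m : ℕ => (ind U (shift^[m] (X m)) - ind U (X m)) / m)
      atTop (𝓝 0) := by
    apply squeeze_zero_norm hdb
    exact tendsto_const_div_atTop_nhds_zero_nat 2
  have := (tendsto_freq_Lfun X U).add (hd0.mono_left UF_le)
  rw [add_zero] at this
  exact this.congr fun m => (hsum m).symm

/-- The key lower bound: the limiting average of `birk φ n` along near-maximizing orbits
is at least `n * logSpr`-like quantity. -/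
lemma Lfun_key (φ : Bool → ℤ → ℝ) {C : ℝ} (hC : ∀ a i, |φ a i| ≤ C) (X : ℕ → Sig) {s : ℝ}
    (hX : ∀ m : ℕ, (m : ℝ) * s - 1 ≤ birk φ m (X m)) {n : ℕ} (hn : 1 ≤ n) :
    (n : ℝ) * s ≤ ∑ w : Fin n → Bool, Lfun X (cylW n w) * wval φ n w := by
  -- pointwise identity
  have hptw : ∀ m : ℕ, ∑ w : Fin n → Bool, freq X (cylW n w) m * wval φ n w
      = (∑ i ∈ Finset.range m, birk φ n (shift^[i] (X m))) / m := by
    intro m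
    have hswap : ∑ w : Fin n → Bool, (∑ i ∈ Finset.range m, ind (cylW n w) (shift^[i] (X m)))
          * wval φ n w
        = ∑ i ∈ Finset.range m, ∑ w : Fin n → Bool,
            ind (cylW n w) (shift^[i] (X m)) * wval φ n w := by
      rw [Finset.sum_comm]
      exact Finset.sum_congr rfl fun w _ => Finset.sum_mul _ _ _
    have hbirk : ∀ y : Sig, ∑ w : Fin n → Bool, ind (cylW n w) y * wval φ n w = birk φ n y := by
      intro y
      rw [birk_eq_sum_indicator φ n y]
      refine Finset.sum_congr rfl fun w _ => ?_
      unfold ind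
      by_cases hy : y ∈ cylW n w
      · simp [hy, Set.indicator_of_mem hy]
      · simp [hy, Set.indicator_of_notMem hy]
    calc ∑ w : Fin n → Bool, freq X (cylW n w) m * wval φ n w
        = (∑ w : Fin n → Bool, (∑ i ∈ Finset.range m, ind (cylW n w) (shift^[i] (X m)))
            * wval φ n w) / m := by
          unfold freq
          rw [Finset.sum_div]
          exact Finset.sum_congr rfl fun w _ => by ring
      _ = (∑ i ∈ Finset.range m, ∑ w : Fin n → Bool,
            ind (cylW n w) (shift^[i] (X m)) * wval φ n w) / m := by rw [hswap]
      _ = (∑ i ∈ Finset.range m, birk φ n (shift^[i] (X m))) / m := by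
          rw [Finset.sum_congr rfl fun i _ => hbirk (shift^[i] (X m))]
  -- lower bound eventually
  have hlow : ∀ m : ℕ, n ≤ m →
      (n : ℝ) * s - ((n : ℝ) + 4 * n ^ 2 * C) / m
        ≤ ∑ w : Fin n → Bool, freq X (cylW n w) m * wval φ n w := by
    intro m hm
    have hm1 : (1 : ℕ) ≤ m := le_trans hn hm
    have hmR : (0 : ℝ) < m := by positivity
    rw [hptw m]
    have h1 := key_lower hC hn hm (X m)
    have h2 := hX m
    have h3 : (n : ℝ) * ((m : ℝ) * s - 1) - 4 * n ^ 2 * C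
        ≤ ∑ i ∈ Finset.range m, birk φ n (shift^[i] (X m)) := by
      have hn0 : (0 : ℝ) ≤ n := by positivity
      nlinarith
    have hkey : ((n:ℝ) * ((m:ℝ) * s - 1) - 4 * n ^ 2 * C) / m
        ≤ (∑ i ∈ Finset.range m, birk φ n (shift^[i] (X m))) / m := by
      gcongr
    have expand : ((n:ℝ) * ((m:ℝ) * s - 1) - 4 * n ^ 2 * C) / m
        = (n : ℝ) * s - ((n : ℝ) + 4 * n ^ 2 * C) / m := by
      field_simp
      ring
    linarith
  -- pass to the limit
  have htv : Filter.Tendsto (fun m => ∑ w : Fin n → Bool, freq X (cylW n w) m * wval φ n w)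
      UF (𝓝 (∑ w : Fin n → Bool, Lfun X (cylW n w) * wval φ n w)) := by
    apply tendsto_finset_sum
    intro w _
    exact (tendsto_freq_Lfun X (cylW n w)).mul_const _
  have htb : Filter.Tendsto (fun m : ℕ => (n : ℝ) * s - ((n : ℝ) + 4 * n ^ 2 * C) / m)
      (UF : Filter ℕ) (𝓝 ((n : ℝ) * s - 0)) := by
    apply Filter.Tendsto.mono_left _ UF_le
    exact tendsto_const_nhds.sub (tendsto_const_div_atTop_nhds_zero_nat _)
  rw [sub_zero] at htb
  refine le_of_tendsto_of_tendsto htb htv ?_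
  apply UF_le
  filter_upwards [Filter.eventually_ge_atTop n] with m hm
  exact hlow m hm

end freq

section separation

/-- Window-`N` approximation of a set. -/
def approxE (N : ℕ) (K : Set Sig) : Set Sig :=
  {y | ∃ z ∈ K, ∀ i : ℤ, i.natAbs ≤ N → y i = z i}

lemma isCyl_approxE (N : ℕ) (K : Set Sig) : IsCyl (approxE N K) := by
  refine ⟨N, fun x y hxy => ?_⟩
  constructor
  · rintro ⟨z, hz, hagree⟩
    exact ⟨z, hz, fun i hi => by rw [← hxy i hi]; exact hagree i hi⟩
  · rintro ⟨z, hz, hagree⟩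
    exact ⟨z, hz, fun i hi => by rw [hxy i hi]; exact hagree i hi⟩

lemma subset_approxE (N : ℕ) (K : Set Sig) : K ⊆ approxE N K :=
  fun y hy => ⟨y, hy, fun _ _ => rfl⟩

lemma exists_isCyl_separation {K₁ K₂ : Set Sig} (h1 : IsCompact K₁) (h2 : IsCompact K₂)
    (hd : Disjoint K₁ K₂) :
    ∃ C₁ C₂ : Set Sig, IsCyl C₁ ∧ IsCyl C₂ ∧ K₁ ⊆ C₁ ∧ K₂ ⊆ C₂ ∧ Disjoint C₁ C₂ := by
  suffices h : ∃ N : ℕ, Disjoint (approxE N K₁) (approxE N K₂) by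
    obtain ⟨N, hN⟩ := h
    exact ⟨approxE N K₁, approxE N K₂, isCyl_approxE N K₁, isCyl_approxE N K₂,
      subset_approxE N K₁, subset_approxE N K₂, hN⟩
  by_contra hcon
  push_neg at hcon
  have hzw : ∀ N : ℕ, ∃ z w : Sig, z ∈ K₁ ∧ w ∈ K₂ ∧ ∀ i : ℤ, i.natAbs ≤ N → z i = w i := by
    intro N
    obtain ⟨y, hy1, hy2⟩ := Set.not_disjoint_iff.mp (hcon N)
    obtain ⟨z, hz, hza⟩ := hy1
    obtain ⟨w, hw, hwa⟩ := hy2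
    exact ⟨z, w, hz, hw, fun i hi => by rw [← hza i hi, ← hwa i hi]⟩
  choose z w hz hw hagree using hzw
  have hpair : ∀ N, (z N, w N) ∈ K₁ ×ˢ K₂ := fun N => ⟨hz N, hw N⟩
  obtain ⟨⟨a, b⟩, hab, ψ, hψ, htend⟩ := (h1.prod h2).tendsto_subseq hpair
  have hfst : Filter.Tendsto (fun k => z (ψ k)) atTop (𝓝 a) :=
    (continuous_fst.tendsto _).comp htend
  have hsnd : Filter.Tendsto (fun k => w (ψ k)) atTop (𝓝 b) :=
    (continuous_snd.tendsto _).comp htend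
  have hab_eq : a = b := by
    funext i
    have ha : ∀ᶠ k in atTop, z (ψ k) i = a i := by
      have := ((continuous_apply i).tendsto a).comp hfst
      rwa [nhds_discrete, Filter.tendsto_pure] at this
    have hb : ∀ᶠ k in atTop, w (ψ k) i = b i := by
      have := ((continuous_apply i).tendsto b).comp hsnd
      rwa [nhds_discrete, Filter.tendsto_pure] at this
    have hk : ∀ᶠ k in atTop, i.natAbs ≤ ψ k := by
      filter_upwards [Filter.eventually_ge_atTop i.natAbs] with k hk
      exact le_trans hk hψ.le_apply
    obtain ⟨k, h1', h2', h3'⟩ := (ha.and (hb.and hk)).exists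
    rw [← h1', ← h2']
    exact hagree (ψ k) i h3'
  rw [hab_eq] at hab
  exact Set.disjoint_left.mp hd hab.1 hab.2

end separation

section content
open TopologicalSpace

lemma Lfun_subadd (X : ℕ → Sig) (U V : Set Sig) :
    Lfun X (U ∪ V) ≤ Lfun X U + Lfun X V := by
  have hptw : ∀ m, freq X (U ∪ V) m ≤ freq X U m + freq X V m := by
    intro m
    unfold freq
    rw [← add_div]
    rcases Nat.eq_zero_or_pos m with hm | hm
    · simp [hm]
    gcongr with i hi
    rw [← Finset.sum_add_distrib]
    refine Finset.sum_le_sum fun i _ => ?_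
    unfold ind
    by_cases hU : shift^[i] (X m) ∈ U <;> by_cases hV : shift^[i] (X m) ∈ V <;>
      simp [hU, hV, Set.mem_union] <;> norm_num
  exact le_of_tendsto_of_tendsto (tendsto_freq_Lfun X (U ∪ V))
    ((tendsto_freq_Lfun X U).add (tendsto_freq_Lfun X V))
    (Filter.univ_mem' hptw)

/-- The candidate content evaluated on arbitrary sets. -/
noncomputable def lamR (X : ℕ → Sig) (K : Set Sig) : ℝ :=
  sInf {a : ℝ | ∃ U : Set Sig, IsCyl U ∧ K ⊆ U ∧ a = Lfun X U}

lemma lamR_set_nonempty (X : ℕ → Sig) (K : Set Sig) :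
    {a : ℝ | ∃ U : Set Sig, IsCyl U ∧ K ⊆ U ∧ a = Lfun X U}.Nonempty :=
  ⟨Lfun X Set.univ, Set.univ, isCyl_univ, Set.subset_univ K, rfl⟩

lemma lamR_set_bddBelow (X : ℕ → Sig) (K : Set Sig) :
    BddBelow {a : ℝ | ∃ U : Set Sig, IsCyl U ∧ K ⊆ U ∧ a = Lfun X U} :=
  ⟨0, by rintro a ⟨U, _, _, rfl⟩; exact Lfun_nonneg X U⟩

lemma lamR_le (X : ℕ → Sig) {K U : Set Sig} (hU : IsCyl U) (hsub : K ⊆ U) :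
    lamR X K ≤ Lfun X U :=
  csInf_le (lamR_set_bddBelow X K) ⟨U, hU, hsub, rfl⟩

lemma lamR_nonneg (X : ℕ → Sig) (K : Set Sig) : 0 ≤ lamR X K :=
  le_csInf (lamR_set_nonempty X K) (by rintro a ⟨U, _, _, rfl⟩; exact Lfun_nonneg X U)

lemma lamR_mono (X : ℕ → Sig) {K₁ K₂ : Set Sig} (h : K₁ ⊆ K₂) : lamR X K₁ ≤ lamR X K₂ :=
  le_csInf (lamR_set_nonempty X K₂)
    (by rintro a ⟨U, hU, hsub, rfl⟩; exact lamR_le X hU (h.trans hsub))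

lemma lamR_of_isCyl (X : ℕ → Sig) {U : Set Sig} (hU : IsCyl U) : lamR X U = Lfun X U := by
  refine le_antisymm (lamR_le X hU Set.Subset.rfl) ?_
  refine le_csInf (lamR_set_nonempty X U) ?_
  rintro a ⟨V, _, hsub, rfl⟩
  exact Lfun_mono X hsub

lemma lamR_union_le (X : ℕ → Sig) (K₁ K₂ : Set Sig) :
    lamR X (K₁ ∪ K₂) ≤ lamR X K₁ + lamR X K₂ := by
  refine le_of_forall_pos_le_add fun ε hε => ?_
  obtain ⟨a₁, ⟨U₁, hU₁, hsub₁, rfl⟩, hlt₁⟩ :=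
    exists_lt_of_csInf_lt (lamR_set_nonempty X K₁)
      (lt_add_of_pos_right (lamR X K₁) (half_pos hε))
  obtain ⟨a₂, ⟨U₂, hU₂, hsub₂, rfl⟩, hlt₂⟩ :=
    exists_lt_of_csInf_lt (lamR_set_nonempty X K₂)
      (lt_add_of_pos_right (lamR X K₂) (half_pos hε))
  have h1 : lamR X (K₁ ∪ K₂) ≤ Lfun X (U₁ ∪ U₂) :=
    lamR_le X (hU₁.union hU₂) (Set.union_subset_union hsub₁ hsub₂)
  have h2 := Lfun_subadd X U₁ U₂
  linarith

lemma lamR_disjoint (X : ℕ → Sig) {K₁ K₂ : Set Sig} (h1 : IsCompact K₁) (h2 : IsCompact K₂)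
    (hd : Disjoint K₁ K₂) : lamR X (K₁ ∪ K₂) = lamR X K₁ + lamR X K₂ := by
  refine le_antisymm (lamR_union_le X K₁ K₂) ?_
  obtain ⟨C₁, C₂, hC₁, hC₂, hs₁, hs₂, hdis⟩ := exists_isCyl_separation h1 h2 hd
  refine le_csInf (lamR_set_nonempty X (K₁ ∪ K₂)) ?_
  rintro a ⟨U, hU, hsub, rfl⟩
  have e1 : lamR X K₁ ≤ Lfun X (U ∩ C₁) :=
    lamR_le X (hU.inter hC₁) (Set.subset_inter (fun y hy => hsub (Or.inl hy)) hs₁)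
  have e2 : lamR X K₂ ≤ Lfun X (U ∩ C₂) :=
    lamR_le X (hU.inter hC₂) (Set.subset_inter (fun y hy => hsub (Or.inr hy)) hs₂)
  have e3 : Lfun X ((U ∩ C₁) ∪ (U ∩ C₂)) = Lfun X (U ∩ C₁) + Lfun X (U ∩ C₂) :=
    Lfun_union X (hdis.mono Set.inter_subset_right Set.inter_subset_right)
  have e4 : Lfun X ((U ∩ C₁) ∪ (U ∩ C₂)) ≤ Lfun X U :=
    Lfun_mono X (Set.union_subset Set.inter_subset_left Set.inter_subset_left)
  linarith

/-- The content associated with the limit frequencies. -/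
noncomputable def freqContent (X : ℕ → Sig) : Content Sig where
  toFun K := (lamR X K).toNNReal
  mono' K₁ K₂ h := Real.toNNReal_mono (lamR_mono X h)
  sup_disjoint' K₁ K₂ hd _ _ := by
    show (lamR X ((K₁ ⊔ K₂ : Compacts Sig) : Set Sig)).toNNReal
        = (lamR X (K₁ : Set Sig)).toNNReal + (lamR X (K₂ : Set Sig)).toNNReal
    rw [Compacts.coe_sup]
    have h : lamR X ((K₁ : Set Sig) ∪ (K₂ : Set Sig))
        = lamR X (K₁ : Set Sig) + lamR X (K₂ : Set Sig) := lamR_disjoint X K₁.2 K₂.2 hd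
    rw [h, Real.toNNReal_add (lamR_nonneg X _) (lamR_nonneg X _)]
  sup_le' K₁ K₂ := by
    show (lamR X ((K₁ ⊔ K₂ : Compacts Sig) : Set Sig)).toNNReal
        ≤ (lamR X (K₁ : Set Sig)).toNNReal + (lamR X (K₂ : Set Sig)).toNNReal
    rw [Compacts.coe_sup, ← Real.toNNReal_add (lamR_nonneg X _) (lamR_nonneg X _)]
    have h : lamR X ((K₁ : Set Sig) ∪ (K₂ : Set Sig))
        ≤ lamR X (K₁ : Set Sig) + lamR X (K₂ : Set Sig) := lamR_union_le X _ _
    exact Real.toNNReal_mono h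

/-- The invariant measure obtained from the limit frequencies. -/
noncomputable def freqMeasure (X : ℕ → Sig) : Measure Sig := (freqContent X).measure

lemma freqMeasure_isCyl (X : ℕ → Sig) {U : Set Sig} (hU : IsCyl U) :
    freqMeasure X U = ENNReal.ofReal (Lfun X U) := by
  unfold freqMeasure
  rw [Content.measure_apply _ hU.measurableSet,
    Content.outerMeasure_of_isOpen _ U hU.isOpen,
    Content.innerContent_of_isCompact _ hU.isCompact hU.isOpen]
  show ((Real.toNNReal (lamR X U) : NNReal) : ENNReal) = ENNReal.ofReal (Lfun X U)
  rw [lamR_of_isCyl X hU]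
  rfl

instance freqMeasure_prob (X : ℕ → Sig) : IsProbabilityMeasure (freqMeasure X) := by
  constructor
  rw [freqMeasure_isCyl X isCyl_univ, Lfun_univ, ENNReal.ofReal_one]

lemma measurable_shift : Measurable shift :=
  measurable_pi_lambda _ fun i => measurable_pi_apply _

lemma sig_measurableSpace_eq :
    (inferInstance : MeasurableSpace Sig) = MeasurableSpace.generateFrom {U | IsCyl U} := by
  refine le_antisymm ?_ (MeasurableSpace.generateFrom_le fun U hU => IsCyl.measurableSet hU)
  have : (inferInstance : MeasurableSpace Sig)
      = ⨆ i : ℤ, (inferInstance : MeasurableSpace Bool).comap (fun x : Sig => x i) := rfl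
  rw [this]
  refine iSup_le fun i => ?_
  rintro s ⟨A, _, rfl⟩
  refine MeasurableSpace.measurableSet_generateFrom ?_
  refine ⟨i.natAbs, fun x y hxy => ?_⟩
  have : x i = y i := hxy i le_rfl
  simp [Set.mem_preimage, this]

lemma freqMeasure_invariant (X : ℕ → Sig) : (freqMeasure X).map shift = freqMeasure X := by
  have hmap : IsProbabilityMeasure ((freqMeasure X).map shift) :=
    Measure.isProbabilityMeasure_map measurable_shift.aemeasurable
  refine MeasureTheory.ext_of_generate_finite {U | IsCyl U} sig_measurableSpace_eq
    (fun U hU V hV _ => hU.inter hV) ?_ ?_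
  · intro U hU
    rw [Measure.map_apply measurable_shift hU.measurableSet,
      freqMeasure_isCyl X hU.preimage_shift, freqMeasure_isCyl X hU, Lfun_shift]
  · rw [hmap.measure_univ, (freqMeasure_prob X).measure_univ]

lemma integral_birk_freqMeasure (φ : Bool → ℤ → ℝ) (X : ℕ → Sig) (n : ℕ) :
    ∫ x, birk φ n x ∂(freqMeasure X)
      = ∑ w : Fin n → Bool, Lfun X (cylW n w) * wval φ n w := by
  rw [integral_birk φ n (freqMeasure X)]
  refine Finset.sum_congr rfl fun w _ => ?_
  rw [freqMeasure_isCyl X (isCyl_cylW n w), ENNReal.toReal_ofReal (Lfun_nonneg X _)]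

end content


section final
variable {φ : Bool → ℤ → ℝ} {C : ℝ}

instance : Nonempty Sig := ⟨fun _ => false⟩

lemma birk_zero (φ : Bool → ℤ → ℝ) (x : Sig) : birk φ 0 x = 0 := by
  unfold birk
  simp [ciSup_const]

lemma sup_birk_le (hC : ∀ a i, |φ a i| ≤ C) (n : ℕ) :
    (⨆ x : Sig, birk φ n x) ≤ n * C := ciSup_le fun x => birk_le hC n x

lemma le_sup_birk (hC : ∀ a i, |φ a i| ≤ C) (n : ℕ) :
    -((n : ℝ) * C) ≤ ⨆ x : Sig, birk φ n x := by
  have h1 : BddAbove (Set.range fun x : Sig => birk φ n x) :=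
    ⟨n * C, by rintro y ⟨x, rfl⟩; exact birk_le hC n x⟩
  exact le_trans (le_birk hC n (fun _ => false)) (le_ciSup h1 _)

lemma logSpr_bddBelow (hC : ∀ a i, |φ a i| ≤ C) :
    BddBelow (Set.range fun n : ℕ => ((n : ℝ) + 1)⁻¹ * ⨆ x : Sig, birk φ (n + 1) x) := by
  refine ⟨-C, ?_⟩
  rintro y ⟨n, rfl⟩
  have h1 : (0 : ℝ) < (n : ℝ) + 1 := by positivity
  have h2 : -(((n + 1 : ℕ) : ℝ) * C) ≤ ⨆ x : Sig, birk φ (n + 1) x := le_sup_birk hC (n + 1)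
  have h3 : ((n : ℝ) + 1)⁻¹ * (-(((n + 1 : ℕ) : ℝ) * C)) ≤
      ((n : ℝ) + 1)⁻¹ * ⨆ x : Sig, birk φ (n + 1) x :=
    mul_le_mul_of_nonneg_left h2 (by positivity)
  refine le_trans (le_of_eq ?_) h3
  push_cast
  field_simp

lemma mul_logSpr_le_sup (hC : ∀ a i, |φ a i| ≤ C) (n : ℕ) :
    ((n : ℝ) + 1) * logSpr φ ≤ ⨆ x : Sig, birk φ (n + 1) x := by
  have h1 : logSpr φ ≤ ((n : ℝ) + 1)⁻¹ * ⨆ x : Sig, birk φ (n + 1) x :=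
    ciInf_le (logSpr_bddBelow hC) n
  have h2 : (0 : ℝ) < (n : ℝ) + 1 := by positivity
  calc ((n : ℝ) + 1) * logSpr φ
      ≤ ((n : ℝ) + 1) * (((n : ℝ) + 1)⁻¹ * ⨆ x : Sig, birk φ (n + 1) x) :=
        mul_le_mul_of_nonneg_left h1 h2.le
    _ = ⨆ x : Sig, birk φ (n + 1) x := by field_simp

lemma exists_near_max (hC : ∀ a i, |φ a i| ≤ C) (m : ℕ) :
    ∃ x : Sig, (m : ℝ) * logSpr φ - 1 ≤ birk φ m x := by
  cases m with
  | zero =>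
    refine ⟨fun _ => false, ?_⟩
    rw [birk_zero]
    norm_num
  | succ n =>
    have h1 : ((n + 1 : ℕ) : ℝ) * logSpr φ - 1 < ⨆ x : Sig, birk φ (n + 1) x := by
      have := mul_logSpr_le_sup hC n
      push_cast
      push_cast at this
      linarith
    obtain ⟨x, hx⟩ := exists_lt_of_lt_ciSup h1
    exact ⟨x, hx.le⟩

theorem logSpr_eq_iSup_Lam' (φ : Bool → ℤ → ℝ)
    (hφ : ∃ C : ℝ, ∀ (a : Bool) (i : ℤ), |φ a i| ≤ C) :
    logSpr φ =
      ⨆ μ : {μ : Measure Sig // IsProbabilityMeasure μ ∧ μ.map shift = μ}, Lam φ μ.1 := by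
  obtain ⟨C, hC⟩ := hφ
  have hC0 : 0 ≤ C := C_nonneg hC
  -- the special invariant measure
  set X : ℕ → Sig := fun m => (exists_near_max hC m).choose with hXdef
  have hX : ∀ m : ℕ, (m : ℝ) * logSpr φ - 1 ≤ birk φ m (X m) :=
    fun m => (exists_near_max hC m).choose_spec
  set μ₀ : Measure Sig := freqMeasure X with hμ₀
  have hμ₀p : IsProbabilityMeasure μ₀ := freqMeasure_prob X
  have hμ₀i : μ₀.map shift = μ₀ := freqMeasure_invariant X
  -- lower bound : logSpr ≤ Lam φ μ₀
  have hD : logSpr φ ≤ Lam φ μ₀ := by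
    refine le_ciInf fun n => ?_
    have hint : ∫ x, birk φ (n + 1) x ∂μ₀
        = ∑ w : Fin (n + 1) → Bool, Lfun X (cylW (n + 1) w) * wval φ (n + 1) w :=
      integral_birk_freqMeasure φ X (n + 1)
    have hkey : ((n + 1 : ℕ) : ℝ) * logSpr φ
        ≤ ∑ w : Fin (n + 1) → Bool, Lfun X (cylW (n + 1) w) * wval φ (n + 1) w :=
      Lfun_key φ hC X hX (Nat.le_add_left 1 n)
    have h2 : ((n : ℝ) + 1) * logSpr φ ≤ ∫ x, birk φ (n + 1) x ∂μ₀ := by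
      rw [hint]
      refine le_trans (le_of_eq ?_) hkey
      push_cast
      ring
    have h3 : (0 : ℝ) < (n : ℝ) + 1 := by positivity
    calc logSpr φ = ((n : ℝ) + 1)⁻¹ * (((n : ℝ) + 1) * logSpr φ) := by field_simp
      _ ≤ ((n : ℝ) + 1)⁻¹ * ∫ x, birk φ (n + 1) x ∂μ₀ :=
          mul_le_mul_of_nonneg_left h2 (by positivity)
  -- easy direction : every invariant probability measure gives Lam ≤ logSpr
  have hE : ∀ μ : Measure Sig, IsProbabilityMeasure μ → Lam φ μ ≤ logSpr φ := by
    intro μ hp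
    haveI := hp
    have hbb : BddBelow (Set.range fun n : ℕ =>
        ((n : ℝ) + 1)⁻¹ * ∫ x, birk φ (n + 1) x ∂μ) := by
      refine ⟨-C, ?_⟩
      rintro y ⟨n, rfl⟩
      have hlow : ∫ x, birk φ (n + 1) x ∂μ ≥ ∫ _x, -(((n + 1 : ℕ) : ℝ) * C) ∂μ := by
        refine integral_mono (integrable_const _) (integrable_birk φ hC (n + 1) μ) ?_
        intro x
        exact le_birk hC (n + 1) x
      rw [integral_const, probReal_univ, one_smul] at hlow
      have h1 : (0 : ℝ) < (n : ℝ) + 1 := by positivity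
      have h3 : ((n : ℝ) + 1)⁻¹ * (-(((n + 1 : ℕ) : ℝ) * C))
          ≤ ((n : ℝ) + 1)⁻¹ * ∫ x, birk φ (n + 1) x ∂μ :=
        mul_le_mul_of_nonneg_left hlow (by positivity)
      refine le_trans (le_of_eq ?_) h3
      push_cast
      field_simp
    refine le_ciInf fun n => ?_
    refine le_trans (ciInf_le hbb n) ?_
    have hste : ∫ x, birk φ (n + 1) x ∂μ ≤ ⨆ x : Sig, birk φ (n + 1) x := by
      have hup : ∫ x, birk φ (n + 1) x ∂μ ≤ ∫ _x, (⨆ x : Sig, birk φ (n + 1) x) ∂μ := by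
        refine integral_mono (integrable_birk φ hC (n + 1) μ) (integrable_const _) ?_
        intro x
        exact le_ciSup ⟨(n + 1 : ℕ) * C, by rintro y ⟨z, rfl⟩; exact birk_le hC (n+1) z⟩ x
      rwa [integral_const, probReal_univ, one_smul] at hup
    exact mul_le_mul_of_nonneg_left hste (by positivity)
  -- conclusion
  haveI : Nonempty {μ : Measure Sig // IsProbabilityMeasure μ ∧ μ.map shift = μ} :=
    ⟨⟨μ₀, hμ₀p, hμ₀i⟩⟩
  refine le_antisymm ?_ ?_
  · refine le_trans hD ?_
    have hbdd : BddAbove (Set.range fun μ : {μ : Measure Sig //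
        IsProbabilityMeasure μ ∧ μ.map shift = μ} => Lam φ μ.1) := by
      refine ⟨C, ?_⟩
      rintro y ⟨μ, rfl⟩
      haveI := μ.2.1
      have h0 : Lam φ μ.1 ≤ (((0 : ℕ) : ℝ) + 1)⁻¹ * ∫ x, birk φ (0 + 1) x ∂μ.1 := by
        have hbb : BddBelow (Set.range fun n : ℕ =>
            ((n : ℝ) + 1)⁻¹ * ∫ x, birk φ (n + 1) x ∂μ.1) := by
          refine ⟨-C, ?_⟩
          rintro y ⟨n, rfl⟩
          have hlow : ∫ x, birk φ (n + 1) x ∂μ.1 ≥ ∫ _x, -(((n + 1 : ℕ) : ℝ) * C) ∂μ.1 := by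
            refine integral_mono (integrable_const _) (integrable_birk φ hC (n + 1) μ.1) ?_
            intro x
            exact le_birk hC (n + 1) x
          rw [integral_const, probReal_univ, one_smul] at hlow
          have h3 : ((n : ℝ) + 1)⁻¹ * (-(((n + 1 : ℕ) : ℝ) * C))
              ≤ ((n : ℝ) + 1)⁻¹ * ∫ x, birk φ (n + 1) x ∂μ.1 :=
            mul_le_mul_of_nonneg_left hlow (by positivity)
          refine le_trans (le_of_eq ?_) h3
          push_cast
          field_simp
        exact ciInf_le hbb 0
      have h1 : ∫ x, birk φ (0 + 1) x ∂μ.1 ≤ ∫ _x, ((0 + 1 : ℕ) : ℝ) * C ∂μ.1 := by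
        refine integral_mono (integrable_birk φ hC (0 + 1) μ.1) (integrable_const _) ?_
        intro x
        exact birk_le hC (0 + 1) x
      rw [integral_const, probReal_univ, one_smul] at h1
      refine le_trans h0 ?_
      push_cast at h1 ⊢
      norm_num at h1 ⊢
      linarith
    exact le_ciSup hbdd ⟨μ₀, hμ₀p, hμ₀i⟩
  · exact ciSup_le fun μ => hE μ.1 μ.2.1

end final


/-- For every bounded `φ`, the logarithm of the joint spectral radius of the pair of
weighted shift operators `(L₀^φ, L₁^φ)` equals the supremum of `Λ(φ, μ)` over all
shift-invariant Borel probability measures `μ` on `Σ₂`. -/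
theorem logSpr_eq_iSup_Lam (φ : Bool → ℤ → ℝ)
    (hφ : ∃ C : ℝ, ∀ (a : Bool) (i : ℤ), |φ a i| ≤ C) :
    logSpr φ =
      ⨆ μ : {μ : Measure Sig // IsProbabilityMeasure μ ∧ μ.map shift = μ}, Lam φ μ.1 := by
  exact logSpr_eq_iSup_Lam' φ hφ
end
end

section
/- For every finite word ω over {0,1} and ε > 0, the set of φ ∈ ℓ∞(ℤ₂ × ℤ) such that |μ₁([ω]) − μ₂([ω])| < ε for all maximising measures μ₁, μ₂ of φ is open in the supremum-norm topology. -/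
open MeasureTheory Filter

noncomputable section

/-- `ℓ∞({0,1} × ℤ)` with the supremum-norm topology (every function on the discrete
space `{0,1} × ℤ` is continuous, so this is the space of all bounded functions). -/
abbrev Linf := BoundedContinuousFunction (Bool × ℤ) ℝ

/-- `birkB φ n x = sup_{k ∈ ℤ} Σ_{i=0}^{n-1} φ (x_i, i+k)`. -/
def birkB (φ : Linf) (n : ℕ) (x : Sig) : ℝ :=
  ⨆ k : ℤ, ∑ i ∈ Finset.range n, φ (x (i : ℤ), (i : ℤ) + k)

/-- The top Lyapunov exponent `Λ(φ,μ) = inf_{n ≥ 1} (1/n) ∫ birkB φ n dμ`. -/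
def LamB (φ : Linf) (μ : Measure Sig) : ℝ :=
  ⨅ n : ℕ, ((n : ℝ) + 1)⁻¹ * ∫ x, birkB φ (n + 1) x ∂μ

/-- `log ϱ(L₀^φ, L₁^φ) = inf_{n ≥ 1} (1/n) sup_x birkB φ n x`. -/
def logSprB (φ : Linf) : ℝ :=
  ⨅ n : ℕ, ((n : ℝ) + 1)⁻¹ * ⨆ x : Sig, birkB φ (n + 1) x

/-- `μ` is a maximising measure for `φ`. -/
def IsMaximising (φ : Linf) (μ : Measure Sig) : Prop :=
  IsProbabilityMeasure μ ∧ μ.map shift = μ ∧ LamB φ μ = logSprB φ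

open Topology

namespace Aux

lemma abs_sum_le (φ : Linf) (n : ℕ) (x : Sig) (k : ℤ) :
    |∑ i ∈ Finset.range n, φ (x (i : ℤ), (i : ℤ) + k)| ≤ n * ‖φ‖ := by
  calc |∑ i ∈ Finset.range n, φ (x (i : ℤ), (i : ℤ) + k)|
      ≤ ∑ i ∈ Finset.range n, |φ (x (i : ℤ), (i : ℤ) + k)| := Finset.abs_sum_le_sum_abs _ _
    _ ≤ ∑ _i ∈ Finset.range n, ‖φ‖ := by
        refine Finset.sum_le_sum fun i _ => ?_
        exact φ.norm_coe_le_norm _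
    _ = n * ‖φ‖ := by simp [mul_comm]

lemma bddAbove_birk (φ : Linf) (n : ℕ) (x : Sig) :
    BddAbove (Set.range fun k : ℤ => ∑ i ∈ Finset.range n, φ (x (i : ℤ), (i : ℤ) + k)) := by
  refine ⟨n * ‖φ‖, ?_⟩
  rintro r ⟨k, rfl⟩
  exact (abs_le.1 (abs_sum_le φ n x k)).2

lemma abs_birkB_le (φ : Linf) (n : ℕ) (x : Sig) : |birkB φ n x| ≤ n * ‖φ‖ := by
  rw [abs_le]
  constructor
  · exact le_trans (abs_le.1 (abs_sum_le φ n x 0)).1 (le_ciSup (bddAbove_birk φ n x) 0)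
  · exact ciSup_le fun k => (abs_le.1 (abs_sum_le φ n x k)).2

lemma birkB_le_add (φ ψ : Linf) (n : ℕ) (x : Sig) :
    birkB φ n x ≤ birkB ψ n x + n * ‖φ - ψ‖ := by
  refine ciSup_le fun k => ?_
  have h1 : ∑ i ∈ Finset.range n, φ (x (i : ℤ), (i : ℤ) + k)
      ≤ (∑ i ∈ Finset.range n, ψ (x (i : ℤ), (i : ℤ) + k)) + n * ‖φ - ψ‖ := by
    have : ∑ i ∈ Finset.range n, (φ (x (i : ℤ), (i : ℤ) + k) - ψ (x (i : ℤ), (i : ℤ) + k))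
        ≤ n * ‖φ - ψ‖ := by
      have := abs_sum_le (φ - ψ) n x k
      simp only [BoundedContinuousFunction.coe_sub, Pi.sub_apply] at this
      exact (abs_le.1 this).2
    rw [Finset.sum_sub_distrib] at this
    linarith
  exact h1.trans (by gcongr; exact le_ciSup (bddAbove_birk ψ n x) k)

lemma abs_birkB_sub_le (φ ψ : Linf) (n : ℕ) (x : Sig) :
    |birkB φ n x - birkB ψ n x| ≤ n * ‖φ - ψ‖ := by
  rw [abs_sub_le_iff]
  refine ⟨by linarith [birkB_le_add φ ψ n x], ?_⟩
  have := birkB_le_add ψ φ n x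
  rw [norm_sub_rev] at this
  linarith

lemma birkB_congr (φ : Linf) (n : ℕ) {x y : Sig} (h : ∀ i : ℕ, i < n → x (i : ℤ) = y (i : ℤ)) :
    birkB φ n x = birkB φ n y := by
  unfold birkB
  congr 1
  funext k
  exact Finset.sum_congr rfl fun i hi => by rw [h i (Finset.mem_range.1 hi)]

lemma continuous_birkB (φ : Linf) (n : ℕ) : Continuous (birkB φ n) := by
  have : IsLocallyConstant (birkB φ n) := by
    rw [IsLocallyConstant.iff_exists_open]
    intro x
    refine ⟨⋂ i : Fin n, (fun y : Sig => y ((i : ℕ) : ℤ)) ⁻¹' {x ((i : ℕ) : ℤ)}, ?_, ?_, ?_⟩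
    · exact isOpen_iInter_of_finite fun i =>
        IsOpen.preimage (continuous_apply (((i : ℕ) : ℤ))) (isOpen_discrete _)
    · simp
    · intro y hy
      simp only [Set.mem_iInter, Set.mem_preimage, Set.mem_singleton_iff] at hy
      exact birkB_congr φ n fun i hi => hy ⟨i, hi⟩
  exact this.continuous

/-- `birkB φ n` as a bounded continuous function. -/
def birkBCF (φ : Linf) (n : ℕ) : BoundedContinuousFunction Sig ℝ :=
  BoundedContinuousFunction.ofNormedAddCommGroup (birkB φ n) (continuous_birkB φ n)
    (n * ‖φ‖) (fun x => by rw [Real.norm_eq_abs]; exact abs_birkB_le φ n x)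

lemma integrable_birkB (φ : Linf) (n : ℕ) (ν : Measure Sig) [IsFiniteMeasure ν] :
    Integrable (birkB φ n) ν := (birkBCF φ n).integrable ν

/-- The cylinder set of a word of length `n` placed at positions `0,…,n-1`. -/
def cylFin (n : ℕ) (v : Fin n → Bool) : Set Sig := {x : Sig | ∀ i : Fin n, x ((i : ℕ) : ℤ) = v i}

lemma isClopen_cylFin (n : ℕ) (v : Fin n → Bool) : IsClopen (cylFin n v) := by
  have : cylFin n v = ⋂ i : Fin n, (fun x : Sig => x ((i : ℕ) : ℤ)) ⁻¹' {v i} := by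
    ext x; simp [cylFin]
  rw [this]
  exact ⟨isClosed_iInter fun i => (isClosed_discrete _).preimage (continuous_apply _),
    isOpen_iInter_of_finite fun i => (isOpen_discrete _).preimage (continuous_apply _)⟩

lemma measurableSet_cylFin (n : ℕ) (v : Fin n → Bool) : MeasurableSet (cylFin n v) :=
  (isClopen_cylFin n v).2.measurableSet

/-- A canonical point of the cylinder `cylFin n v`. -/
def extf (n : ℕ) (v : Fin n → Bool) : Sig := fun j =>
  if h : 0 ≤ j ∧ j < n then v ⟨j.toNat, by omega⟩ else false

lemma extf_mem (n : ℕ) (v : Fin n → Bool) (i : ℕ) (hi : i < n) :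
    extf n v ((i : ℤ)) = v ⟨i, hi⟩ := by
  have h : (0 : ℤ) ≤ (i : ℤ) ∧ (i : ℤ) < n := by constructor <;> omega
  simp only [extf, dif_pos h, Int.toNat_natCast]

lemma mem_cylFin_iff (n : ℕ) (v : Fin n → Bool) (x : Sig) :
    x ∈ cylFin n v ↔ (fun i : Fin n => x ((i : ℕ) : ℤ)) = v := by
  simp [cylFin, funext_iff]


lemma birkB_eq_sum_indicator (φ : Linf) (n : ℕ) (x : Sig) :
    birkB φ n x = ∑ v : Fin n → Bool,
      (cylFin n v).indicator (fun _ => birkB φ n (extf n v)) x := by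
  classical
  set v₀ : Fin n → Bool := fun i => x ((i : ℕ) : ℤ) with hv₀
  rw [Finset.sum_eq_single v₀]
  · have hx : x ∈ cylFin n v₀ := by intro i; rfl
    rw [Set.indicator_of_mem hx]
    refine birkB_congr φ n fun i hi => ?_
    rw [extf_mem n v₀ i hi]
  · intro v _ hv
    rw [Set.indicator_of_notMem]
    rw [mem_cylFin_iff]
    exact fun h => hv (by rw [← h])
  · intro h
    exact absurd (Finset.mem_univ v₀) h

lemma integral_birkB (φ : Linf) (n : ℕ) (ν : Measure Sig) [IsFiniteMeasure ν] :
    ∫ x, birkB φ n x ∂ν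
      = ∑ v : Fin n → Bool, (ν (cylFin n v)).toReal * birkB φ n (extf n v) := by
  have h1 : ∫ x, birkB φ n x ∂ν = ∫ x, (∑ v : Fin n → Bool,
      (cylFin n v).indicator (fun _ => birkB φ n (extf n v)) x) ∂ν := by
    refine integral_congr_ae (Filter.Eventually.of_forall fun x => ?_)
    exact birkB_eq_sum_indicator φ n x
  rw [h1, integral_finset_sum]
  · refine Finset.sum_congr rfl fun v _ => ?_
    rw [integral_indicator_const _ (measurableSet_cylFin n v), smul_eq_mul]
    rfl
  · intro v _
    exact (integrable_const _).indicator (measurableSet_cylFin n v)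

open scoped ENNReal

section Ulim
variable (𝒰 : Ultrafilter ℕ)

/-- Ultrafilter limit of a sequence in `ℝ≥0∞`. -/
def ulim (u : ℕ → ℝ≥0∞) : ℝ≥0∞ := (𝒰.map u).lim

lemma tendsto_ulim (u : ℕ → ℝ≥0∞) : Tendsto u 𝒰 (𝓝 (ulim 𝒰 u)) := by
  have := (𝒰.map u).le_nhds_lim
  rwa [Tendsto, ← Ultrafilter.coe_map]

lemma ulim_eq {u : ℕ → ℝ≥0∞} {a : ℝ≥0∞} (h : Tendsto u 𝒰 (𝓝 a)) : ulim 𝒰 u = a :=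
  tendsto_nhds_unique (tendsto_ulim 𝒰 u) h

lemma ulim_mono {u v : ℕ → ℝ≥0∞} (h : ∀ m, u m ≤ v m) : ulim 𝒰 u ≤ ulim 𝒰 v :=
  le_of_tendsto_of_tendsto' (tendsto_ulim 𝒰 u) (tendsto_ulim 𝒰 v) h

lemma ulim_le_one {u : ℕ → ℝ≥0∞} (h : ∀ m, u m ≤ 1) : ulim 𝒰 u ≤ 1 :=
  le_of_tendsto' (tendsto_ulim 𝒰 u) h

lemma ulim_ne_top {u : ℕ → ℝ≥0∞} (h : ∀ m, u m ≤ 1) : ulim 𝒰 u ≠ ∞ :=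
  ((ulim_le_one 𝒰 h).trans_lt ENNReal.one_lt_top).ne

lemma ulim_add {u v : ℕ → ℝ≥0∞} : ulim 𝒰 (fun m => u m + v m) = ulim 𝒰 u + ulim 𝒰 v :=
  ulim_eq 𝒰 ((tendsto_ulim 𝒰 u).add (tendsto_ulim 𝒰 v))

variable (ν : ℕ → Measure Sig)

lemma meas_le_one (hν : ∀ m, IsProbabilityMeasure (ν m)) (m : ℕ) (s : Set Sig) : ν m s ≤ 1 := by
  have := hν m; exact prob_le_one

/-- The content obtained as ultrafilter limit of the measures `ν m` on compact sets. -/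
def limCont (hν : ∀ m, IsProbabilityMeasure (ν m)) : Content Sig where
  toFun K := (ulim 𝒰 fun m => ν m K).toNNReal
  mono' K₁ K₂ h := ENNReal.toNNReal_mono
    (ulim_ne_top 𝒰 fun m => meas_le_one ν hν m _)
    (ulim_mono 𝒰 fun m => measure_mono h)
  sup_disjoint' K₁ K₂ hd _ h₂ := by
    have key : (fun m => ν m (↑(K₁ ⊔ K₂) : Set Sig))
        = fun m => ν m K₁ + ν m K₂ := by
      funext m
      have : (↑(K₁ ⊔ K₂) : Set Sig) = ↑K₁ ∪ ↑K₂ := rfl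
      rw [this, measure_union hd h₂.measurableSet]
    rw [key, ulim_add]
    exact ENNReal.toNNReal_add (ulim_ne_top 𝒰 fun m => meas_le_one ν hν m _)
      (ulim_ne_top 𝒰 fun m => meas_le_one ν hν m _)
  sup_le' K₁ K₂ := by
    have h1 : ulim 𝒰 (fun m => ν m (↑(K₁ ⊔ K₂) : Set Sig))
        ≤ ulim 𝒰 (fun m => ν m K₁ + ν m K₂) := by
      refine ulim_mono 𝒰 fun m => ?_
      have : (↑(K₁ ⊔ K₂) : Set Sig) = ↑K₁ ∪ ↑K₂ := rfl
      rw [this]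
      exact measure_union_le _ _
    rw [ulim_add] at h1
    calc (ulim 𝒰 fun m => ν m (↑(K₁ ⊔ K₂) : Set Sig)).toNNReal
        ≤ (ulim 𝒰 (fun m => ν m K₁) + ulim 𝒰 (fun m => ν m K₂)).toNNReal := by
          refine ENNReal.toNNReal_mono ?_ h1
          exact ENNReal.add_ne_top.2 ⟨ulim_ne_top 𝒰 fun m => meas_le_one ν hν m _,
            ulim_ne_top 𝒰 fun m => meas_le_one ν hν m _⟩
      _ = _ := ENNReal.toNNReal_add (ulim_ne_top 𝒰 fun m => meas_le_one ν hν m _)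
            (ulim_ne_top 𝒰 fun m => meas_le_one ν hν m _)

variable (hν : ∀ m, IsProbabilityMeasure (ν m))

/-- The limit measure. -/
def limMeas : Measure Sig := (limCont 𝒰 ν hν).measure

lemma limMeas_clopen {C : Set Sig} (hC : IsClopen C) :
    limMeas 𝒰 ν hν C = ulim 𝒰 fun m => ν m C := by
  have hcomp : IsCompact C := hC.1.isCompact
  rw [limMeas, (limCont 𝒰 ν hν).measure_apply hC.2.measurableSet,
    (limCont 𝒰 ν hν).outerMeasure_of_isOpen C hC.2,
    (limCont 𝒰 ν hν).innerContent_of_isCompact hcomp hC.2]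
  exact ENNReal.coe_toNNReal (ulim_ne_top 𝒰 fun m => meas_le_one ν hν m _)

lemma limMeas_prob : IsProbabilityMeasure (limMeas 𝒰 ν hν) := by
  constructor
  rw [limMeas_clopen 𝒰 ν hν isClopen_univ]
  refine ulim_eq 𝒰 ?_
  have : (fun m => ν m Set.univ) = fun _ => (1 : ℝ≥0∞) := by
    funext m; have := hν m; exact measure_univ
  rw [this]
  exact tendsto_const_nhds


lemma continuous_shift : Continuous shift := continuous_pi fun i => continuous_apply (i + 1)

lemma measurable_shift : Measurable shift :=
  measurable_pi_lambda _ fun i => measurable_pi_apply (i + 1)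

lemma isClopen_of_mem_cylinders {s : Set Sig}
    (hs : s ∈ measurableCylinders (fun _ : ℤ => Bool)) : IsClopen s := by
  obtain ⟨t, S, hS, rfl⟩ := (mem_measurableCylinders _).1 hs
  have hc : Continuous (t.restrict : Sig → (t → Bool)) :=
    continuous_pi fun i => continuous_apply _
  exact ⟨(isClosed_discrete S).preimage hc, (isOpen_discrete S).preimage hc⟩

lemma limMeas_invariant (hinv : ∀ m, (ν m).map shift = ν m) :
    (limMeas 𝒰 ν hν).map shift = limMeas 𝒰 ν hν := by
  have hprob := limMeas_prob 𝒰 ν hν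
  have hmap : IsProbabilityMeasure ((limMeas 𝒰 ν hν).map shift) :=
    Measure.isProbabilityMeasure_map measurable_shift.aemeasurable
  refine ext_of_generate_finite (measurableCylinders (fun _ : ℤ => Bool))
    generateFrom_measurableCylinders.symm isPiSystem_measurableCylinders (fun s hs => ?_)
    (by rw [hprob.measure_univ, hmap.measure_univ])
  have hclopen : IsClopen s := isClopen_of_mem_cylinders hs
  have hclopen' : IsClopen (shift ⁻¹' s) := hclopen.preimage continuous_shift
  rw [Measure.map_apply measurable_shift (MeasurableSet.of_mem_measurableCylinders hs),
    limMeas_clopen 𝒰 ν hν hclopen', limMeas_clopen 𝒰 ν hν hclopen]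
  congr 1
  funext m
  rw [← Measure.map_apply measurable_shift (MeasurableSet.of_mem_measurableCylinders hs),
    hinv m]

lemma tendsto_integral_birkB (hν : ∀ m, IsProbabilityMeasure (ν m)) (φ : Linf) (n : ℕ) :
    Tendsto (fun m => ∫ x, birkB φ n x ∂(ν m)) 𝒰
      (𝓝 (∫ x, birkB φ n x ∂(limMeas 𝒰 ν hν))) := by
  haveI : IsProbabilityMeasure (limMeas 𝒰 ν hν) := limMeas_prob 𝒰 ν hν
  have h1 : ∀ m, ∫ x, birkB φ n x ∂(ν m)
      = ∑ v : Fin n → Bool, ((ν m) (cylFin n v)).toReal * birkB φ n (extf n v) := by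
    intro m
    haveI := hν m
    exact integral_birkB φ n (ν m)
  simp only [h1, integral_birkB φ n (limMeas 𝒰 ν hν)]
  refine tendsto_finset_sum _ fun v _ => ?_
  refine Tendsto.mul_const _ ?_
  rw [limMeas_clopen 𝒰 ν hν (isClopen_cylFin n v)]
  exact (ENNReal.tendsto_toReal (ulim_ne_top 𝒰 fun m => meas_le_one ν hν m _)).comp
    (tendsto_ulim 𝒰 _)

lemma tendsto_cylFin_toReal (hν : ∀ m, IsProbabilityMeasure (ν m)) (n : ℕ) (v : Fin n → Bool) :
    Tendsto (fun m => ((ν m) (cylFin n v)).toReal) 𝒰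
      (𝓝 (((limMeas 𝒰 ν hν) (cylFin n v)).toReal)) := by
  rw [limMeas_clopen 𝒰 ν hν (isClopen_cylFin n v)]
  exact (ENNReal.tendsto_toReal (ulim_ne_top 𝒰 fun m => meas_le_one ν hν m _)).comp
    (tendsto_ulim 𝒰 _)

end Ulim

section Lam

variable (φ ψ : Linf)

lemma bddAbove_range_birkB (n : ℕ) : BddAbove (Set.range (birkB φ n)) := by
  refine ⟨n * ‖φ‖, ?_⟩
  rintro r ⟨x, rfl⟩
  exact (abs_le.1 (abs_birkB_le φ n x)).2

lemma birkB_le_csSup (n : ℕ) (x : Sig) : birkB φ n x ≤ ⨆ y : Sig, birkB φ n y :=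
  le_ciSup (bddAbove_range_birkB φ n) x

lemma abs_csSup_birkB_le (n : ℕ) : |⨆ y : Sig, birkB φ n y| ≤ n * ‖φ‖ := by
  rw [abs_le]
  constructor
  · refine le_trans ?_ (birkB_le_csSup φ n (fun _ => false))
    exact (abs_le.1 (abs_birkB_le φ n _)).1
  · exact ciSup_le fun y => (abs_le.1 (abs_birkB_le φ n y)).2

lemma abs_integral_birkB_le (n : ℕ) (ν : Measure Sig) [IsProbabilityMeasure ν] :
    |∫ x, birkB φ n x ∂ν| ≤ n * ‖φ‖ := by
  have h := norm_integral_le_of_norm_le_const (μ := ν) (f := birkB φ n) (C := n * ‖φ‖)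
    (Filter.Eventually.of_forall fun x => by
      rw [Real.norm_eq_abs]; exact abs_birkB_le φ n x)
  simpa using h

/-- The `n`-th term of `LamB`. -/
def lamTerm (ν : Measure Sig) (n : ℕ) : ℝ := ((n : ℝ) + 1)⁻¹ * ∫ x, birkB φ (n + 1) x ∂ν

/-- The `n`-th term of `logSprB`. -/
def sprTerm (n : ℕ) : ℝ := ((n : ℝ) + 1)⁻¹ * ⨆ x : Sig, birkB φ (n + 1) x

lemma abs_lamTerm_le (ν : Measure Sig) [IsProbabilityMeasure ν] (n : ℕ) :
    |lamTerm φ ν n| ≤ ‖φ‖ := by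
  rw [lamTerm, abs_mul, abs_inv]
  have h1 : |((n : ℝ) + 1)| = (n : ℝ) + 1 := abs_of_pos (by positivity)
  rw [h1]
  have h2 := abs_integral_birkB_le φ (n + 1) ν
  have h3 : (0 : ℝ) < (n : ℝ) + 1 := by positivity
  rw [inv_mul_le_iff₀ h3]
  calc |∫ x, birkB φ (n+1) x ∂ν| ≤ (n + 1 : ℕ) * ‖φ‖ := h2
    _ = ((n : ℝ) + 1) * ‖φ‖ := by push_cast; ring

lemma abs_sprTerm_le (n : ℕ) : |sprTerm φ n| ≤ ‖φ‖ := by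
  rw [sprTerm, abs_mul, abs_inv]
  have h1 : |((n : ℝ) + 1)| = (n : ℝ) + 1 := abs_of_pos (by positivity)
  rw [h1]
  have h3 : (0 : ℝ) < (n : ℝ) + 1 := by positivity
  rw [inv_mul_le_iff₀ h3]
  calc |⨆ x : Sig, birkB φ (n+1) x| ≤ (n + 1 : ℕ) * ‖φ‖ := abs_csSup_birkB_le φ (n + 1)
    _ = ((n : ℝ) + 1) * ‖φ‖ := by push_cast; ring

lemma bddBelow_lamTerm (ν : Measure Sig) [IsProbabilityMeasure ν] :
    BddBelow (Set.range (lamTerm φ ν)) := by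
  refine ⟨-‖φ‖, ?_⟩
  rintro r ⟨n, rfl⟩
  exact (abs_le.1 (abs_lamTerm_le φ ν n)).1

lemma bddBelow_sprTerm : BddBelow (Set.range (sprTerm φ)) := by
  refine ⟨-‖φ‖, ?_⟩
  rintro r ⟨n, rfl⟩
  exact (abs_le.1 (abs_sprTerm_le φ n)).1

lemma LamB_eq_iInf (ν : Measure Sig) : LamB φ ν = ⨅ n : ℕ, lamTerm φ ν n := rfl

lemma logSprB_eq_iInf : logSprB φ = ⨅ n : ℕ, sprTerm φ n := rfl

lemma LamB_le_logSprB (ν : Measure Sig) [IsProbabilityMeasure ν] :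
    LamB φ ν ≤ logSprB φ := by
  rw [LamB_eq_iInf, logSprB_eq_iInf]
  refine ciInf_mono (bddBelow_lamTerm φ ν) fun n => ?_
  rw [lamTerm, sprTerm]
  have h3 : (0 : ℝ) ≤ ((n : ℝ) + 1)⁻¹ := by positivity
  refine mul_le_mul_of_nonneg_left ?_ h3
  calc ∫ x, birkB φ (n+1) x ∂ν
      ≤ ∫ _x, (⨆ y : Sig, birkB φ (n+1) y) ∂ν := by
        refine integral_mono (integrable_birkB φ (n+1) ν) (integrable_const _) ?_
        intro x
        exact birkB_le_csSup φ (n+1) x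
    _ = ⨆ y : Sig, birkB φ (n+1) y := by
        rw [integral_const, probReal_univ]; simp

lemma LamB_le_add (ν : Measure Sig) [IsProbabilityMeasure ν] :
    LamB φ ν ≤ LamB ψ ν + ‖φ - ψ‖ := by
  rw [LamB_eq_iInf, LamB_eq_iInf]
  have key : ∀ n, lamTerm φ ν n ≤ lamTerm ψ ν n + ‖φ - ψ‖ := by
    intro n
    rw [lamTerm, lamTerm]
    have h3 : (0 : ℝ) < ((n : ℝ) + 1) := by positivity
    have hint : ∫ x, birkB φ (n+1) x ∂ν ≤ (∫ x, birkB ψ (n+1) x ∂ν) + ((n : ℝ) + 1) * ‖φ - ψ‖ := by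
      calc ∫ x, birkB φ (n+1) x ∂ν
          ≤ ∫ x, (birkB ψ (n+1) x + ((n + 1 : ℕ) : ℝ) * ‖φ - ψ‖) ∂ν := by
            refine integral_mono (integrable_birkB φ (n+1) ν)
              ((integrable_birkB ψ (n+1) ν).add (integrable_const _)) ?_
            intro x
            exact birkB_le_add φ ψ (n+1) x
        _ = (∫ x, birkB ψ (n+1) x ∂ν) + ((n : ℝ) + 1) * ‖φ - ψ‖ := by
            rw [integral_add (integrable_birkB ψ (n+1) ν) (integrable_const _),
              integral_const, probReal_univ]
            push_cast
            simp
    calc ((n : ℝ) + 1)⁻¹ * ∫ x, birkB φ (n+1) x ∂ν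
        ≤ ((n : ℝ) + 1)⁻¹ * ((∫ x, birkB ψ (n+1) x ∂ν) + ((n : ℝ) + 1) * ‖φ - ψ‖) := by
          refine mul_le_mul_of_nonneg_left hint (by positivity)
      _ = ((n : ℝ) + 1)⁻¹ * (∫ x, birkB ψ (n+1) x ∂ν) + ‖φ - ψ‖ := by
          field_simp
  have hb := bddBelow_lamTerm ψ ν
  refine le_trans ?_ (add_le_add_left (le_refl (⨅ n, lamTerm ψ ν n)) ‖φ - ψ‖)
  rw [← sub_le_iff_le_add]
  refine le_ciInf fun n => ?_
  rw [sub_le_iff_le_add]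
  exact (ciInf_le (bddBelow_lamTerm φ ν) n).trans (key n)

lemma logSprB_le_add : logSprB φ ≤ logSprB ψ + ‖φ - ψ‖ := by
  rw [logSprB_eq_iInf, logSprB_eq_iInf]
  have key : ∀ n, sprTerm φ n ≤ sprTerm ψ n + ‖φ - ψ‖ := by
    intro n
    rw [sprTerm, sprTerm]
    have hsup : (⨆ x : Sig, birkB φ (n+1) x)
        ≤ (⨆ x : Sig, birkB ψ (n+1) x) + ((n : ℝ) + 1) * ‖φ - ψ‖ := by
      refine ciSup_le fun x => ?_
      calc birkB φ (n+1) x ≤ birkB ψ (n+1) x + ((n + 1 : ℕ) : ℝ) * ‖φ - ψ‖ :=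
            birkB_le_add φ ψ (n+1) x
        _ ≤ (⨆ y : Sig, birkB ψ (n+1) y) + ((n : ℝ) + 1) * ‖φ - ψ‖ := by
            push_cast
            gcongr
            exact birkB_le_csSup ψ (n+1) x
    calc ((n : ℝ) + 1)⁻¹ * ⨆ x : Sig, birkB φ (n+1) x
        ≤ ((n : ℝ) + 1)⁻¹ * ((⨆ x : Sig, birkB ψ (n+1) x) + ((n : ℝ) + 1) * ‖φ - ψ‖) := by
          refine mul_le_mul_of_nonneg_left hsup (by positivity)
      _ = ((n : ℝ) + 1)⁻¹ * (⨆ x : Sig, birkB ψ (n+1) x) + ‖φ - ψ‖ := by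
          field_simp
  rw [← sub_le_iff_le_add]
  refine le_ciInf fun n => ?_
  rw [sub_le_iff_le_add]
  exact (ciInf_le (bddBelow_sprTerm φ) n).trans (key n)

lemma abs_logSprB_sub_le : |logSprB φ - logSprB ψ| ≤ ‖φ - ψ‖ := by
  rw [abs_sub_le_iff]
  refine ⟨by linarith [logSprB_le_add φ ψ], ?_⟩
  have := logSprB_le_add ψ φ
  rw [norm_sub_rev] at this
  linarith

end Lam

section Main

lemma dist_tendsto {u : ℕ → Linf} {φ : Linf} (hu : Tendsto u atTop (𝓝 φ)) :
    Tendsto (fun m => ‖u m - φ‖) atTop (𝓝 0) := by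
  have := (tendsto_iff_dist_tendsto_zero).1 hu
  simpa [dist_eq_norm] using this

/-- The limit measure of a sequence of maximising measures along an ultrafilter is maximising. -/
lemma limMeas_isMaximising (𝒰 : Ultrafilter ℕ) (h𝒰 : (𝒰 : Filter ℕ) ≤ atTop)
    (u : ℕ → Linf) (φ : Linf) (hu : Tendsto u atTop (𝓝 φ))
    (ν : ℕ → Measure Sig) (hν : ∀ m, IsProbabilityMeasure (ν m))
    (hmax : ∀ m, IsMaximising (u m) (ν m)) :
    IsMaximising φ (limMeas 𝒰 ν hν) := by
  haveI hprob : IsProbabilityMeasure (limMeas 𝒰 ν hν) := limMeas_prob 𝒰 ν hν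
  refine ⟨hprob, limMeas_invariant 𝒰 ν hν (fun m => (hmax m).2.1), ?_⟩
  refine le_antisymm (LamB_le_logSprB φ _) ?_
  rw [LamB_eq_iInf]
  refine le_ciInf fun n => ?_
  have hlow : ∀ m, logSprB φ - 2 * ‖u m - φ‖ ≤ lamTerm φ (ν m) n := by
    intro m
    haveI := hν m
    have h1 : LamB φ (ν m) ≤ lamTerm φ (ν m) n := ciInf_le (bddBelow_lamTerm φ (ν m)) n
    have h2 : LamB (u m) (ν m) ≤ LamB φ (ν m) + ‖u m - φ‖ := LamB_le_add (u m) φ (ν m)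
    have h3 : logSprB φ ≤ logSprB (u m) + ‖φ - u m‖ := logSprB_le_add φ (u m)
    have h4 : LamB (u m) (ν m) = logSprB (u m) := (hmax m).2.2
    have h5 : ‖φ - u m‖ = ‖u m - φ‖ := norm_sub_rev _ _
    linarith
  have htendlow : Tendsto (fun m => logSprB φ - 2 * ‖u m - φ‖) (𝒰 : Filter ℕ)
      (𝓝 (logSprB φ)) := by
    have h0 : Tendsto (fun m => ‖u m - φ‖) (𝒰 : Filter ℕ) (𝓝 0) :=
      (dist_tendsto hu).mono_left h𝒰
    have := (tendsto_const_nhds (x := logSprB φ) (f := (𝒰 : Filter ℕ))).sub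
      (h0.const_mul 2)
    simpa using this
  have htendhi : Tendsto (fun m => lamTerm φ (ν m) n) (𝒰 : Filter ℕ)
      (𝓝 (lamTerm φ (limMeas 𝒰 ν hν) n)) := by
    unfold lamTerm
    exact (tendsto_integral_birkB 𝒰 ν hν φ (n + 1)).const_mul _
  exact le_of_tendsto_of_tendsto' htendlow htendhi hlow

theorem isOpen_close_cylinder_measures'
    (N : ℕ) (ω : Fin N → Bool) (ε : ℝ) (hε : 0 < ε) :
    IsOpen {φ : Linf | ∀ μ₁ μ₂ : Measure Sig,
      IsMaximising φ μ₁ → IsMaximising φ μ₂ →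
      |(μ₁ {x : Sig | ∀ i : Fin N, x (i : ℤ) = ω i}).toReal -
        (μ₂ {x : Sig | ∀ i : Fin N, x (i : ℤ) = ω i}).toReal| < ε} := by
  have hset : {x : Sig | ∀ i : Fin N, x (i : ℤ) = ω i} = cylFin N ω := rfl
  rw [← isClosed_compl_iff]
  refine IsSeqClosed.isClosed ?_
  intro u φ hmem hu
  simp only [Set.mem_compl_iff, Set.mem_setOf_eq, not_forall, not_lt] at hmem ⊢
  choose ν₁ ν₂ h₁ h₂ hdist using hmem
  set 𝒰 : Ultrafilter ℕ := Ultrafilter.of atTop with h𝒰def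
  have h𝒰 : (𝒰 : Filter ℕ) ≤ atTop := Ultrafilter.of_le _
  have hν₁ : ∀ m, IsProbabilityMeasure (ν₁ m) := fun m => (h₁ m).1
  have hν₂ : ∀ m, IsProbabilityMeasure (ν₂ m) := fun m => (h₂ m).1
  refine ⟨limMeas 𝒰 ν₁ hν₁, limMeas 𝒰 ν₂ hν₂,
    limMeas_isMaximising 𝒰 h𝒰 u φ hu ν₁ hν₁ h₁,
    limMeas_isMaximising 𝒰 h𝒰 u φ hu ν₂ hν₂ h₂, ?_⟩
  rw [hset]
  have ht1 := tendsto_cylFin_toReal 𝒰 ν₁ hν₁ N ω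
  have ht2 := tendsto_cylFin_toReal 𝒰 ν₂ hν₂ N ω
  have habs : Tendsto (fun m => |((ν₁ m) (cylFin N ω)).toReal - ((ν₂ m) (cylFin N ω)).toReal|)
      (𝒰 : Filter ℕ)
      (𝓝 |((limMeas 𝒰 ν₁ hν₁) (cylFin N ω)).toReal - ((limMeas 𝒰 ν₂ hν₂) (cylFin N ω)).toReal|) :=
    (ht1.sub ht2).abs
  refine ge_of_tendsto habs ?_
  refine Filter.Eventually.of_forall fun m => ?_
  have := hdist m
  rw [hset] at this
  exact this

end Main

end Aux

/-- For every finite word `ω` over `{0,1}` and every `ε > 0`, the set of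
`φ ∈ ℓ∞({0,1} × ℤ)` such that `|μ₁ [ω] − μ₂ [ω]| < ε` for all maximising measures
`μ₁, μ₂` of `φ` is open in the supremum-norm topology, where `[ω]` denotes the cylinder
set of `ω`. -/
theorem isOpen_close_cylinder_measures
    (N : ℕ) (ω : Fin N → Bool) (ε : ℝ) (hε : 0 < ε) :
    IsOpen {φ : Linf | ∀ μ₁ μ₂ : Measure Sig,
      IsMaximising φ μ₁ → IsMaximising φ μ₂ →
      |(μ₁ {x : Sig | ∀ i : Fin N, x (i : ℤ) = ω i}).toReal -
        (μ₂ {x : Sig | ∀ i : Fin N, x (i : ℤ) = ω i}).toReal| < ε} :=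
  Aux.isOpen_close_cylinder_measures' N ω ε hε
end
end
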